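/- arXiv:2205.04082 — 3 statements merged into one kernel-verified Lean document; each statement's English description precedes it below -/
import Mathlib

section
/- Let n and t be nonnegative integers with 3t ≤ n, and set m = n − 3t. If m is even, then the maximum of mis(G) over all simple graphs G on n vertices that contain no induced triangle matching of size t+1 equals 3^t · 2^{m/2}; that is, every such graph G satisfies mis(G) ≤ 3^t · 2^{m/2}, and some such graph attains this value. -/
/-- A finset of vertices is independent: no two of its elements are adjacent. -/
def IsIndepFinset {V : Type*} (G : SimpleGraph V) (s : Finset V) : Prop :=
  ∀ ⦃a⦄, a ∈ s → ∀ ⦃b⦄, b ∈ s → ¬ G.Adj a b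

/-- A finset of vertices is a maximal independent set: it is independent and is not
properly contained in any other independent set. -/
def IsMaxIndepFinset {V : Type*} (G : SimpleGraph V) (s : Finset V) : Prop :=
  IsIndepFinset G s ∧ ∀ t : Finset V, IsIndepFinset G t → s ⊆ t → s = t

/-- `mis G` is the number of maximal independent sets of `G`. -/
noncomputable def mis {V : Type*} (G : SimpleGraph V) : ℕ :=
  Set.ncard {s : Finset V | IsMaxIndepFinset G s}

/-- `G` has an induced triangle matching of size `t`: there are `t` pairwise disjoint
triples of vertices, each triple pairwise adjacent (a triangle), with no edges between
distinct triples (so the induced subgraph on their union is a disjoint union of `t`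
triangles). -/
def HasInducedTriangleMatching {V : Type*} (G : SimpleGraph V) (t : ℕ) : Prop :=
  ∃ f : Fin t → Finset V,
    (∀ i, (f i).card = 3) ∧
    (∀ i j, i ≠ j → Disjoint (f i) (f j)) ∧
    (∀ i, ∀ a ∈ f i, ∀ b ∈ f i, a ≠ b → G.Adj a b) ∧
    (∀ i j, i ≠ j → ∀ a ∈ f i, ∀ b ∈ f j, ¬ G.Adj a b)

/-- `G` has an induced matching of size `t`: there are `t` pairwise disjoint
pairs of vertices, each pair adjacent, with no edges between distinct pairs. -/
def HasInducedMatching {V : Type*} (G : SimpleGraph V) (t : ℕ) : Prop :=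
  ∃ f : Fin t → Finset V,
    (∀ i, (f i).card = 2) ∧
    (∀ i j, i ≠ j → Disjoint (f i) (f j)) ∧
    (∀ i, ∀ a ∈ f i, ∀ b ∈ f i, a ≠ b → G.Adj a b) ∧
    (∀ i j, i ≠ j → ∀ a ∈ f i, ∀ b ∈ f j, ¬ G.Adj a b)

/-!
By strong induction on `n = |V|`, a graph with no induced triangle matching of size `t + 1`
satisfies `mis G ^ 2 * 8 ^ t ≤ 9 ^ t * 2 ^ n`, which for `n = 3t + 2r` reads
`mis G ≤ 3 ^ t * 2 ^ r`. The maximal independent sets containing `X` and avoiding `Y` inject,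
by restriction, into those of the residual graph `G - N[X] - Y`, so `mis G` is at most a sum
over a cover by such classes, and a class whose residual graph has lost `k` vertices
contributes a share `2 ^ (-k/2)` of the bound. One branches on a vertex of degree `≥ 3`
(in or out), on an isolated vertex, on a vertex of degree one or its neighbour, and when all
degrees are two, either on the three vertices of a triangle component, which uses up one of
the `t` triangles, or along a path `b - v - a - x`: a maximal independent set contains `v`,
or `a`, or both `b` and `x`. In each case the shares add up to at most one. Equality holds
for `t` disjoint triangles together with `r` disjoint edges.
-/

section MaxIndep

open scoped Classical

variable {V : Type*} {G : SimpleGraph V}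

theorem IsMaxIndepFinset.exists_adj_of_notMem {S : Finset V} (hS : IsMaxIndepFinset G S) {v : V}
    (hv : v ∉ S) : ∃ w ∈ S, G.Adj v w := by
  by_contra! h
  have hindep : IsIndepFinset G (insert v S) := by
    intro a ha b hb
    rw [Finset.mem_insert] at ha hb
    rcases ha with rfl | ha <;> rcases hb with rfl | hb
    · exact G.irrefl
    · exact h b hb
    · exact fun hab => h a ha hab.symm
    · exact hS.1 ha hb
  exact hv (hS.2 _ hindep (Finset.subset_insert v S) ▸ Finset.mem_insert_self v S)

theorem mis_of_isEmpty [IsEmpty V] (G : SimpleGraph V) : mis G = 1 := by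
  have hempty : IsMaxIndepFinset G ∅ :=
    ⟨fun a => isEmptyElim a, fun T _ _ => T.eq_empty_of_isEmpty.symm⟩
  exact Set.ncard_eq_one.2
    ⟨∅, Set.eq_singleton_iff_unique_mem.2 ⟨hempty, fun S _ => S.eq_empty_of_isEmpty⟩⟩

/-- `G - N[X] - Y`: the vertices left to a maximal independent set containing `X` and avoiding
`Y`. -/
def residualSet (G : SimpleGraph V) (X Y : Finset V) : Set V :=
  {v | v ∉ X ∧ v ∉ Y ∧ ∀ x ∈ X, ¬ G.Adj x v}

def maxIndepClass (G : SimpleGraph V) (X Y : Finset V) : Set (Finset V) :=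
  {S | IsMaxIndepFinset G S ∧ X ⊆ S ∧ Disjoint S Y}

variable {X Y S : Finset V}

theorem mem_residualSet_of_mem (hS : S ∈ maxIndepClass G X Y) {v : V} (hv : v ∈ S)
    (hvX : v ∉ X) : v ∈ residualSet G X Y :=
  ⟨hvX, Finset.disjoint_left.1 hS.2.2 hv, fun _ hx => hS.1.1 (hS.2.1 hx) hv⟩

theorem eq_union_map_subtype_residualSet (hS : S ∈ maxIndepClass G X Y) :
    S = X ∪ (S.subtype (· ∈ residualSet G X Y)).map (Function.Embedding.subtype _) := by
  ext v
  simp only [Finset.mem_union, Finset.mem_map, Finset.mem_subtype, Function.Embedding.coe_subtype,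
    Subtype.exists, exists_and_right, exists_eq_right]
  by_cases hvX : v ∈ X
  · simp [hvX, hS.2.1 hvX]
  · simpa [hvX] using fun hv => mem_residualSet_of_mem hS hv hvX

theorem isMaxIndepFinset_subtype_residualSet (hS : S ∈ maxIndepClass G X Y) :
    IsMaxIndepFinset (G.induce (residualSet G X Y)) (S.subtype (· ∈ residualSet G X Y)) := by
  set W := residualSet G X Y
  refine ⟨fun a ha b hb hab => hS.1.1 (Finset.mem_subtype.1 ha) (Finset.mem_subtype.1 hb) hab,
    fun T hT hST => ?_⟩
  set T' := X ∪ T.map (Function.Embedding.subtype (· ∈ W))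
  have hT'indep : IsIndepFinset G T' := by
    intro a ha b hb hab
    simp only [T', Finset.mem_union, Finset.mem_map, Function.Embedding.coe_subtype] at ha hb
    rcases ha with ha | ⟨a, ha, rfl⟩ <;> rcases hb with hb | ⟨b, hb, rfl⟩
    · exact hS.1.1 (hS.2.1 ha) (hS.2.1 hb) hab
    · exact b.2.2.2 a ha hab
    · exact a.2.2.2 b hb hab.symm
    · exact hT ha hb hab
  have hST' : S ⊆ T' := by
    rw [eq_union_map_subtype_residualSet hS]
    exact Finset.union_subset_union le_rfl (Finset.map_subset_map.2 hST)
  refine hST.antisymm fun b hb => Finset.mem_subtype.2 ?_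
  rw [hS.1.2 T' hT'indep hST']
  exact Finset.mem_union_right _ (Finset.mem_map_of_mem _ hb)

theorem ncard_maxIndepClass_le [Finite V] (G : SimpleGraph V) (X Y : Finset V) :
    (maxIndepClass G X Y).ncard ≤ mis (G.induce (residualSet G X Y)) := by
  refine Set.ncard_le_ncard_of_injOn (fun S => S.subtype (· ∈ residualSet G X Y))
    (fun S hS => isMaxIndepFinset_subtype_residualSet hS) (fun S₁ hS₁ S₂ hS₂ h => ?_)
  rw [eq_union_map_subtype_residualSet hS₁, eq_union_map_subtype_residualSet hS₂]
  exact congrArg (fun T => X ∪ T.map (Function.Embedding.subtype _)) h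

end MaxIndep

section TriangleMatching

variable {V V' : Type*} {G : SimpleGraph V} {G' : SimpleGraph V'} {k : ℕ}

def IsInducedTriangleMatching (G : SimpleGraph V) (f : Fin k → Finset V) : Prop :=
  (∀ i, (f i).card = 3) ∧ (∀ i j, i ≠ j → Disjoint (f i) (f j)) ∧
    (∀ i, ∀ a ∈ f i, ∀ b ∈ f i, a ≠ b → G.Adj a b) ∧
    (∀ i j, i ≠ j → ∀ a ∈ f i, ∀ b ∈ f j, ¬ G.Adj a b)

theorem hasInducedTriangleMatching_iff :
    HasInducedTriangleMatching G k ↔ ∃ f : Fin k → Finset V, IsInducedTriangleMatching G f :=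
  Iff.rfl

theorem IsInducedTriangleMatching.map {f : Fin k → Finset V'}
    (hf : IsInducedTriangleMatching G' f) (e : G' ↪g G) :
    IsInducedTriangleMatching G (fun i => (f i).map e.toEmbedding) := by
  obtain ⟨hcard, hdisj, hadj, hnadj⟩ := hf
  refine ⟨fun i => by simpa using hcard i,
    fun i j hij => Finset.disjoint_map _ |>.2 (hdisj i j hij), ?_, ?_⟩
  · simp only [Finset.mem_map]
    rintro i _ ⟨a, ha, rfl⟩ _ ⟨b, hb, rfl⟩ hab
    exact e.map_adj_iff.2 (hadj i a ha b hb (ne_of_apply_ne _ hab))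
  · simp only [Finset.mem_map]
    rintro i j hij _ ⟨a, ha, rfl⟩ _ ⟨b, hb, rfl⟩
    exact e.map_adj_iff.not.2 (hnadj i j hij a ha b hb)

theorem HasInducedTriangleMatching.of_induce {W : Set V}
    (h : HasInducedTriangleMatching (G.induce W) k) : HasInducedTriangleMatching G k :=
  let ⟨_, hf⟩ := h
  ⟨_, IsInducedTriangleMatching.map hf (SimpleGraph.Embedding.induce W)⟩

theorem IsInducedTriangleMatching.cons {f : Fin k → Finset V} (hf : IsInducedTriangleMatching G f)
    {T : Finset V} (hT : G.IsNClique 3 T) (hdisj : ∀ i, Disjoint T (f i))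
    (hnadj : ∀ i, ∀ a ∈ T, ∀ b ∈ f i, ¬ G.Adj a b) :
    IsInducedTriangleMatching G (Fin.cons T f : Fin (k + 1) → Finset V) := by
  obtain ⟨hcard, hdisj', hadj, hnadj'⟩ := hf
  refine ⟨Fin.cases hT.card_eq hcard, ?_,
    Fin.cases (fun a ha b hb => hT.isClique ha hb) hadj, ?_⟩
  · intro i j hij
    cases i using Fin.cases <;> cases j using Fin.cases
    · exact absurd rfl hij
    · exact hdisj _
    · exact (hdisj _).symm
    · exact hdisj' _ _ (fun h => hij (congrArg _ h))
  · intro i j hij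
    cases i using Fin.cases <;> cases j using Fin.cases
    · exact absurd rfl hij
    · exact hnadj _
    · exact fun a ha b hb hab => hnadj _ b hb a ha hab.symm
    · exact hnadj' _ _ (fun h => hij (congrArg _ h))

theorem HasInducedTriangleMatching.succ_of_induce {W : Set V}
    (h : HasInducedTriangleMatching (G.induce W) k) {T : Finset V} (hT : G.IsNClique 3 T)
    (hW : ∀ y ∈ W, y ∉ T ∧ ∀ x ∈ T, ¬ G.Adj x y) :
    HasInducedTriangleMatching G (k + 1) := by
  obtain ⟨f, hf⟩ := hasInducedTriangleMatching_iff.1 h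
  refine ⟨_, (hf.map (SimpleGraph.Embedding.induce W)).cons hT (fun i => ?_) ?_⟩
  · simp only [Finset.disjoint_right, Finset.mem_map]
    rintro _ ⟨y, -, rfl⟩
    exact (hW y y.2).1
  · simp only [Finset.mem_map]
    rintro i x hx _ ⟨y, -, rfl⟩
    exact (hW y y.2).2 x hx

theorem hasInducedTriangleMatching_zero (G : SimpleGraph V) : HasInducedTriangleMatching G 0 :=
  ⟨Fin.elim0, fun i => i.elim0, fun i => i.elim0, fun i => i.elim0, fun i => i.elim0⟩

end TriangleMatching

-- The shares `1/2 + 1/2`, `1/√2 + 1/4` and `1/√8 + 1/√8 + 1/4` of the branchings are at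
-- most `1`.
theorem sq_mul_le_of_le_add_of_quarter {u a b K Q : ℕ} (hu : u ≤ a + b)
    (ha : a ^ 2 * K * 4 ≤ Q) (hb : b ^ 2 * K * 4 ≤ Q) : u ^ 2 * K ≤ Q := by
  have hu' : u ^ 2 * K ≤ (a + b) ^ 2 * K := by gcongr
  have : 0 ≤ ((a : ℤ) - b) ^ 2 * K := by positivity
  zify at *
  nlinarith

theorem sq_mul_le_of_le_add_of_half_of_sixteenth {u a b K Q : ℕ} (hu : u ≤ a + b)
    (ha : a ^ 2 * K * 2 ≤ Q) (hb : b ^ 2 * K * 16 ≤ Q) : u ^ 2 * K ≤ Q := by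
  have hu' : u ^ 2 * K ≤ (a + b) ^ 2 * K := by gcongr
  have : 0 ≤ ((a : ℤ) - 2 * b) ^ 2 * K := by positivity
  zify at *
  nlinarith

theorem sq_mul_le_of_le_add_add {u a b c K Q : ℕ} (hu : u ≤ a + b + c)
    (ha : a ^ 2 * K * 8 ≤ Q) (hb : b ^ 2 * K * 8 ≤ Q) (hc : c ^ 2 * K * 16 ≤ Q) :
    u ^ 2 * K ≤ Q := by
  have hu' : u ^ 2 * K ≤ (a + b + c) ^ 2 * K := by gcongr
  have hab : 0 ≤ ((a : ℤ) - b) ^ 2 * K := by positivity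
  have hac : 0 ≤ ((a : ℤ) - c) ^ 2 * K := by positivity
  have hbc : 0 ≤ ((b : ℤ) - c) ^ 2 * K := by positivity
  zify at *
  nlinarith

theorem Set.natCard_add_card_le_of_disjoint {α : Type*} [Finite α] {s : Set α} {t : Finset α}
    (h : Disjoint s ↑t) : Nat.card s + t.card ≤ Nat.card α := by
  rw [Nat.card_coe_set_eq, ← Set.ncard_coe_finset, ← Set.ncard_union_eq h]
  exact Set.ncard_le_card _

theorem Set.exists_eq_pair_of_ncard_eq_two {α : Type*} {s : Set α} (hs : s.ncard = 2) {a : α}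
    (ha : a ∈ s) : ∃ b, b ≠ a ∧ s = {a, b} := by
  obtain ⟨x, y, hxy, rfl⟩ := Set.ncard_eq_two.1 hs
  rcases ha with rfl | rfl
  · exact ⟨y, hxy.symm, rfl⟩
  · exact ⟨x, hxy, Set.pair_comm _ _⟩

section UpperBound

variable {V : Type*} {G : SimpleGraph V} {t : ℕ}

/-- `mis G ≤ (9 / 8) ^ (t / 2) * 2 ^ (|V| / 2)`, squared to stay in `ℕ`. -/
def MisBound (G : SimpleGraph V) (t : ℕ) : Prop :=
  mis G ^ 2 * 8 ^ t ≤ 9 ^ t * 2 ^ Nat.card V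

def MisBoundBelow (G : SimpleGraph V) : Prop :=
  ∀ W : Set V, Nat.card W < Nat.card V → ∀ s,
    ¬ HasInducedTriangleMatching (G.induce W) (s + 1) → MisBound (G.induce W) s

theorem MisBound.of_isEmpty [IsEmpty V] (G : SimpleGraph V) (t : ℕ) : MisBound G t := by
  simpa [MisBound, mis_of_isEmpty] using Nat.pow_le_pow_left (by norm_num : 8 ≤ 9) t

variable [Finite V]

theorem MisBoundBelow.sq_ncard_maxIndepClass_mul_le (IH : MisBoundBelow G) (X Y Z : Finset V)
    (hZ : ∀ z ∈ Z, z ∉ residualSet G X Y) (hZ₀ : Z.Nonempty) {s : ℕ}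
    (hs : ¬ HasInducedTriangleMatching (G.induce (residualSet G X Y)) (s + 1)) :
    (maxIndepClass G X Y).ncard ^ 2 * 8 ^ s * 2 ^ Z.card ≤ 9 ^ s * 2 ^ Nat.card V := by
  have hcard := Set.natCard_add_card_le_of_disjoint (Set.disjoint_right.2 hZ)
  have hIH : MisBound _ s := IH _ (by have := hZ₀.card_pos; omega) s hs
  calc (maxIndepClass G X Y).ncard ^ 2 * 8 ^ s * 2 ^ Z.card
      ≤ mis (G.induce (residualSet G X Y)) ^ 2 * 8 ^ s * 2 ^ Z.card := by
        gcongr; exact ncard_maxIndepClass_le G X Y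
    _ ≤ 9 ^ s * 2 ^ Nat.card (residualSet G X Y) * 2 ^ Z.card := Nat.mul_le_mul_right _ hIH
    _ ≤ 9 ^ s * 2 ^ Nat.card V := by
        rw [mul_assoc, ← pow_add]; gcongr; norm_num

theorem MisBoundBelow.misBound_of_neighborSet_eq_empty (IH : MisBoundBelow G)
    (hG : ¬ HasInducedTriangleMatching G (t + 1)) {v : V} (hv : G.neighborSet v = ∅) :
    MisBound G t := by
  have hcover : mis G ≤ (maxIndepClass G {v} ∅).ncard := by
    refine Set.ncard_le_ncard fun S hS => ⟨hS, Finset.singleton_subset_iff.2 ?_, by simp⟩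
    by_contra hvS
    obtain ⟨w, -, hw⟩ := hS.exists_adj_of_notMem hvS
    simpa [hv] using (G.mem_neighborSet v w).2 hw
  have hA := IH.sq_ncard_maxIndepClass_mul_le {v} ∅ {v} (by simp [residualSet]) (by simp)
    fun h => hG h.of_induce
  rw [Finset.card_singleton, pow_one] at hA
  calc mis G ^ 2 * 8 ^ t ≤ (maxIndepClass G {v} ∅).ncard ^ 2 * 8 ^ t := by gcongr
    _ ≤ _ := (Nat.le_mul_of_pos_right _ two_pos).trans hA

theorem MisBoundBelow.misBound_of_neighborSet_eq_singleton (IH : MisBoundBelow G)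
    (hG : ¬ HasInducedTriangleMatching G (t + 1)) {v w : V} (hv : G.neighborSet v = {w}) :
    MisBound G t := by
  classical
  have hvw : G.Adj v w := by simp [← G.mem_neighborSet, hv]
  have hcover : mis G ≤ (maxIndepClass G {v} ∅).ncard + (maxIndepClass G {w} ∅).ncard := by
    refine (Set.ncard_le_ncard fun S hS => ?_).trans (Set.ncard_union_le _ _)
    by_cases hvS : v ∈ S
    · exact Or.inl ⟨hS, by simpa using hvS, by simp⟩
    obtain ⟨x, hxS, hx⟩ := hS.exists_adj_of_notMem hvS
    obtain rfl : x = w := by simpa [hv] using (G.mem_neighborSet v x).2 hx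
    exact Or.inr ⟨hS, by simpa using hxS, by simp⟩
  have hA := IH.sq_ncard_maxIndepClass_mul_le {v} ∅ {v, w} (by simp [residualSet, hvw])
    (by simp) fun h => hG h.of_induce
  have hB := IH.sq_ncard_maxIndepClass_mul_le {w} ∅ {w, v} (by simp [residualSet, hvw.symm])
    (by simp) fun h => hG h.of_induce
  rw [Finset.card_pair hvw.ne] at hA
  rw [Finset.card_pair hvw.ne.symm] at hB
  exact sq_mul_le_of_le_add_of_quarter hcover hA hB

theorem MisBoundBelow.misBound_of_two_lt_ncard_neighborSet (IH : MisBoundBelow G)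
    (hG : ¬ HasInducedTriangleMatching G (t + 1)) {u : V}
    (hu : 2 < (G.neighborSet u).ncard) : MisBound G t := by
  classical
  obtain ⟨a, b, c, hua, hub, huc, hab, hac, hbc⟩ := (Set.two_lt_ncard_iff (Set.toFinite _)).1 hu
  rw [SimpleGraph.mem_neighborSet] at hua hub huc
  have hcover : mis G ≤ (maxIndepClass G ∅ {u}).ncard + (maxIndepClass G {u} ∅).ncard := by
    refine (Set.ncard_le_ncard fun S hS => ?_).trans (Set.ncard_union_le _ _)
    by_cases huS : u ∈ S
    · exact Or.inr ⟨hS, by simpa using huS, by simp⟩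
    · exact Or.inl ⟨hS, by simp, by simpa using huS⟩
  have hA := IH.sq_ncard_maxIndepClass_mul_le ∅ {u} {u} (by simp [residualSet]) (by simp)
    fun h => hG h.of_induce
  have hB := IH.sq_ncard_maxIndepClass_mul_le {u} ∅ {u, a, b, c}
    (by simp [residualSet, hua, hub, huc]) (by simp) fun h => hG h.of_induce
  rw [Finset.card_insert_of_notMem (by simp [hua.ne, hub.ne, huc.ne]),
    Finset.card_insert_of_notMem (by simp [hab, hac]), Finset.card_pair hbc] at hB
  exact sq_mul_le_of_le_add_of_half_of_sixteenth hcover hA hB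

theorem MisBoundBelow.misBound_of_degree_two_path (IH : MisBoundBelow G)
    (hG : ¬ HasInducedTriangleMatching G (t + 1)) {v a b x : V} (hv : G.neighborSet v = {a, b})
    (hab : a ≠ b) (hnab : ¬ G.Adj a b) (ha : G.neighborSet a = {v, x}) (hxv : x ≠ v) :
    MisBound G t := by
  classical
  have hva : G.Adj v a := by simp [← G.mem_neighborSet, hv]
  have hvb : G.Adj v b := by simp [← G.mem_neighborSet, hv]
  have hax : G.Adj a x := by simp [← G.mem_neighborSet, ha]
  have hbx : b ≠ x := by rintro rfl; exact hnab hax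
  have hcover : mis G ≤ (maxIndepClass G {v} ∅).ncard + (maxIndepClass G {a} ∅).ncard +
      (maxIndepClass G {b, x} ∅).ncard := by
    refine (Set.ncard_le_ncard fun S hS => ?_).trans <| (Set.ncard_union_le _ _).trans <|
      Nat.add_le_add_right (Set.ncard_union_le _ _) _
    by_cases hvS : v ∈ S
    · exact Or.inl (Or.inl ⟨hS, by simpa using hvS, by simp⟩)
    by_cases haS : a ∈ S
    · exact Or.inl (Or.inr ⟨hS, by simpa using haS, by simp⟩)
    obtain ⟨y, hyS, hy⟩ := hS.exists_adj_of_notMem hvS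
    obtain ⟨z, hzS, hz⟩ := hS.exists_adj_of_notMem haS
    rw [← G.mem_neighborSet, hv] at hy
    rw [← G.mem_neighborSet, ha] at hz
    obtain rfl | rfl := hy
    · exact absurd hyS haS
    obtain rfl | rfl := hz
    · exact absurd hzS hvS
    exact Or.inr ⟨hS, Finset.insert_subset hyS (by simpa using hzS), by simp⟩
  have hA := IH.sq_ncard_maxIndepClass_mul_le {v} ∅ {v, a, b}
    (by simp [residualSet, hva, hvb]) (by simp) fun h => hG h.of_induce
  have hB := IH.sq_ncard_maxIndepClass_mul_le {a} ∅ {a, v, x}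
    (by simp [residualSet, hva.symm, hax]) (by simp) fun h => hG h.of_induce
  have hC := IH.sq_ncard_maxIndepClass_mul_le {b, x} ∅ {b, x, v, a}
    (by simp [residualSet, hvb.symm, hax.symm]) (by simp) fun h => hG h.of_induce
  rw [Finset.card_eq_three.2 ⟨v, a, b, hva.ne, hvb.ne, hab, rfl⟩] at hA
  rw [Finset.card_eq_three.2 ⟨a, v, x, hva.ne.symm, hax.ne, hxv.symm, rfl⟩] at hB
  rw [Finset.card_insert_of_notMem (by simp [hbx, hvb.ne.symm, hab.symm]),
    Finset.card_eq_three.2 ⟨x, v, a, hxv, hax.ne.symm, hva.ne, rfl⟩] at hC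
  exact sq_mul_le_of_le_add_add hcover hA hB hC

theorem MisBoundBelow.misBound_of_triangle_component (IH : MisBoundBelow G)
    (hG : ¬ HasInducedTriangleMatching G (t + 1)) {T : Finset V} (hT : G.IsNClique 3 T)
    (hN : ∀ x ∈ T, G.neighborSet x = ↑T \ {x}) : MisBound G t := by
  have hres : ∀ x ∈ T, ∀ y ∈ residualSet G {x} ∅, y ∉ T ∧ ∀ z ∈ T, ¬ G.Adj z y := by
    rintro x hx y ⟨hyx, -, hxy⟩
    have hyT : y ∉ T := fun hyT =>
      hxy x (Finset.mem_singleton_self x) <| by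
        rw [← G.mem_neighborSet, hN x hx]; simpa [hyT] using hyx
    refine ⟨hyT, fun z hz hzy => hyT ?_⟩
    rw [← G.mem_neighborSet, hN z hz] at hzy
    exact hzy.1
  obtain _ | s := t
  · exact (hG ((hasInducedTriangleMatching_zero _).succ_of_induce (W := ∅) hT (by simp))).elim
  have hcover : mis G ≤ ∑ x ∈ T, (maxIndepClass G {x} ∅).ncard := by
    refine (Set.ncard_le_ncard fun S hS => ?_).trans (T.set_ncard_biUnion_le _)
    obtain ⟨x, hx⟩ : T.Nonempty := by simp [← Finset.card_pos, hT.card_eq]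
    simp only [Set.mem_iUnion]
    by_cases hxS : x ∈ S
    · exact ⟨x, hx, hS, by simpa using hxS, by simp⟩
    obtain ⟨w, hwS, hw⟩ := hS.exists_adj_of_notMem hxS
    rw [← G.mem_neighborSet, hN x hx] at hw
    exact ⟨w, hw.1, hS, by simpa using hwS, by simp⟩
  have hclass : ∀ x ∈ T, (maxIndepClass G {x} ∅).ncard ^ 2 * 8 ^ s * 2 ^ 3 ≤
      9 ^ s * 2 ^ Nat.card V := fun x hx =>
    hT.card_eq ▸ IH.sq_ncard_maxIndepClass_mul_le {x} ∅ T
      (fun z hz hzW => (hres x hx z hzW).1 hz)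
      (by simp [← Finset.card_pos, hT.card_eq])
      fun h => hG (h.succ_of_induce hT (hres x hx))
  calc mis G ^ 2 * 8 ^ (s + 1)
      ≤ (∑ x ∈ T, (maxIndepClass G {x} ∅).ncard) ^ 2 * 8 ^ (s + 1) := by gcongr
    _ ≤ (T.card * ∑ x ∈ T, (maxIndepClass G {x} ∅).ncard ^ 2) * 8 ^ (s + 1) := by
        gcongr; exact sq_sum_le_card_mul_sum_sq
    _ = 3 * ∑ x ∈ T, (maxIndepClass G {x} ∅).ncard ^ 2 * 8 ^ s * 2 ^ 3 := by
        rw [hT.card_eq, mul_assoc, Finset.sum_mul]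
        exact congrArg _ (Finset.sum_congr rfl fun x _ => by ring)
    _ ≤ 3 * ∑ _x ∈ T, 9 ^ s * 2 ^ Nat.card V :=
        Nat.mul_le_mul_left _ (Finset.sum_le_sum hclass)
    _ = 9 ^ (s + 1) * 2 ^ Nat.card V := by
        rw [Finset.sum_const, hT.card_eq, smul_eq_mul]; ring

theorem MisBoundBelow.misBound_of_forall_ncard_neighborSet_eq_two (IH : MisBoundBelow G)
    (hG : ¬ HasInducedTriangleMatching G (t + 1)) (h2 : ∀ u, (G.neighborSet u).ncard = 2)
    (v : V) : MisBound G t := by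
  classical
  obtain ⟨a, b, hab, hv⟩ := Set.ncard_eq_two.1 (h2 v)
  have hva : G.Adj v a := by simp [← G.mem_neighborSet, hv]
  have hvb : G.Adj v b := by simp [← G.mem_neighborSet, hv]
  by_cases hadj : G.Adj a b
  · have hT : G.IsNClique 3 {v, a, b} := SimpleGraph.is3Clique_triple_iff.2 ⟨hva, hvb, hadj⟩
    refine IH.misBound_of_triangle_component hG hT fun x hx => ?_
    refine (Set.eq_of_subset_of_ncard_le (t := G.neighborSet x)
      (fun y hy => hT.isClique hx hy.1 (Ne.symm hy.2)) ?_).symm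
    rw [h2 x, Set.ncard_sdiff_singleton_of_mem (Finset.mem_coe.2 hx), Set.ncard_coe_finset,
      hT.card_eq]
  · obtain ⟨x, hxv, ha⟩ := Set.exists_eq_pair_of_ncard_eq_two (h2 a) hva.symm
    exact IH.misBound_of_degree_two_path hG hv hab hadj ha hxv

theorem MisBoundBelow.misBound (IH : MisBoundBelow G)
    (hG : ¬ HasInducedTriangleMatching G (t + 1)) : MisBound G t := by
  rcases isEmpty_or_nonempty V with hV | ⟨⟨v⟩⟩
  · exact .of_isEmpty G t
  by_cases h3 : ∃ u, 2 < (G.neighborSet u).ncard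
  · obtain ⟨u, hu⟩ := h3
    exact IH.misBound_of_two_lt_ncard_neighborSet hG hu
  by_cases h0 : ∃ u, (G.neighborSet u).ncard = 0
  · obtain ⟨u, hu⟩ := h0
    exact IH.misBound_of_neighborSet_eq_empty hG ((Set.ncard_eq_zero (Set.toFinite _)).1 hu)
  by_cases h1 : ∃ u, (G.neighborSet u).ncard = 1
  · obtain ⟨u, hu⟩ := h1
    exact IH.misBound_of_neighborSet_eq_singleton hG (Set.ncard_eq_one.1 hu).choose_spec
  refine IH.misBound_of_forall_ncard_neighborSet_eq_two hG (fun u => ?_) v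
  simp only [not_exists] at h3 h0 h1
  have := h3 u
  have := h0 u
  have := h1 u
  omega

theorem misBound_of_not_hasInducedTriangleMatching (G : SimpleGraph V)
    (hG : ¬ HasInducedTriangleMatching G (t + 1)) : MisBound G t := by
  induction h : Nat.card V using Nat.strong_induction_on generalizing V t with
  | _ n ih => exact MisBoundBelow.misBound (fun W hW s hs => ih _ (h ▸ hW) (G.induce W) hs rfl) hG

theorem mis_le_of_not_hasInducedTriangleMatching (G : SimpleGraph V) {r : ℕ}
    (hV : Nat.card V = 3 * t + 2 * r) (hG : ¬ HasInducedTriangleMatching G (t + 1)) :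
    mis G ≤ 3 ^ t * 2 ^ r := by
  have h := misBound_of_not_hasInducedTriangleMatching G hG
  have hsq : 9 ^ t * 2 ^ (3 * t + 2 * r) = (3 ^ t * 2 ^ r) ^ 2 * 8 ^ t := by
    rw [show (9 : ℕ) = 3 ^ 2 from rfl, show (8 : ℕ) = 2 ^ 3 from rfl, ← pow_mul, ← pow_mul]
    ring
  rw [MisBound, hV, hsq] at h
  exact (Nat.pow_le_pow_iff_left two_ne_zero).1 (Nat.le_of_mul_le_mul_right h (by positivity))

end UpperBound

section ClusterGraph

variable {V I : Type*} {β : V → I}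

def clusterGraph (β : V → I) : SimpleGraph V where
  Adj a b := a ≠ b ∧ β a = β b
  symm := ⟨fun _ _ h => ⟨h.1.symm, h.2.symm⟩⟩
  loopless := ⟨fun _ h => h.1 rfl⟩

def transversal [Fintype I] (β : V → I) (g : ∀ i, {v // β v = i}) : Finset V :=
  Finset.univ.map
    ⟨fun i => g i, fun i j h => by simpa only [(g i).2, (g j).2] using congrArg β h⟩

theorem IsInducedTriangleMatching.exists_injective_clusterGraph [Finite V] {k : ℕ}
    {f : Fin k → Finset V} (hf : IsInducedTriangleMatching (clusterGraph β) f) :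
    ∃ g : Fin k → I, Function.Injective g ∧ ∀ j, 3 ≤ Nat.card {v // β v = g j} := by
  obtain ⟨hcard, hdisj, hadj, hnadj⟩ := hf
  have hne : ∀ j, (f j).Nonempty := fun j => Finset.card_pos.1 (by rw [hcard j]; norm_num)
  choose a ha using hne
  have hblock : ∀ j, ∀ b ∈ f j, β b = β (a j) := fun j b hb =>
    (eq_or_ne b (a j)).elim (congrArg β) fun hba => (hadj j b hb (a j) (ha j) hba).2
  refine ⟨fun j => β (a j), fun j l hjl => ?_, fun j => ?_⟩
  · by_contra hne
    refine hnadj j l hne (a j) (ha j) (a l) (ha l) ⟨fun h => ?_, hjl⟩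
    exact Finset.disjoint_left.1 (hdisj j l hne) (ha j) (h ▸ ha l)
  · rw [← hcard j, ← Set.ncard_coe_finset, ← Nat.card_coe_set_eq]
    exact Nat.card_mono (Set.toFinite {v | β v = β (a j)}) fun b hb => hblock j b hb

variable [Fintype I]

theorem mem_transversal {g : ∀ i, {v // β v = i}} {v : V} :
    v ∈ transversal β g ↔ (g (β v) : V) = v := by
  rw [transversal, Finset.mem_map]
  refine ⟨fun ⟨i, _, hi⟩ => ?_, fun h => ⟨β v, Finset.mem_univ _, h⟩⟩
  change (g i : V) = v at hi
  subst hi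
  rw [(g i).2]

theorem transversal_injective : Function.Injective (transversal (I := I) β) := by
  intro g g' h
  funext i
  have := mem_transversal.1 (h ▸ mem_transversal.2 (congrArg (fun i => (g i : V)) (g i).2))
  rw [(g i).2] at this
  exact Subtype.ext this.symm

theorem isMaxIndepFinset_transversal (g : ∀ i, {v // β v = i}) :
    IsMaxIndepFinset (clusterGraph β) (transversal β g) := by
  refine ⟨fun a ha b hb hab => hab.1 ?_, fun T hT hsub => hsub.antisymm fun x hx => ?_⟩
  · rw [← mem_transversal.1 ha, ← mem_transversal.1 hb, hab.2]
  · have hgx := hsub (mem_transversal.2 (congrArg (fun i => (g i : V)) (g (β x)).2))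
    by_contra hxT
    exact hT hx hgx ⟨fun h => hxT (mem_transversal.2 h.symm), (g (β x)).2.symm⟩

theorem IsMaxIndepFinset.exists_transversal_eq (hβ : Function.Surjective β) {S : Finset V}
    (hS : IsMaxIndepFinset (clusterGraph β) S) : ∃ g, transversal β g = S := by
  have hmeet : ∀ i, ∃ v ∈ S, β v = i := by
    intro i
    obtain ⟨v, rfl⟩ := hβ i
    by_cases hv : v ∈ S
    · exact ⟨v, hv, rfl⟩
    · obtain ⟨w, hwS, hw⟩ := hS.exists_adj_of_notMem hv
      exact ⟨w, hwS, hw.2.symm⟩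
  choose g hgS hg using hmeet
  refine ⟨fun i => ⟨g i, hg i⟩, Finset.Subset.antisymm (fun v hv => ?_) fun v hv => ?_⟩
  · rw [← mem_transversal.1 hv]
    exact hgS _
  · exact mem_transversal.2 (not_not.1 fun hne => hS.1 (hgS (β v)) hv ⟨hne, hg (β v)⟩)

theorem mis_clusterGraph [Finite V] (hβ : Function.Surjective β) :
    mis (clusterGraph β) = ∏ i, Nat.card {v // β v = i} := by
  have hrange : Set.range (transversal β) = {S | IsMaxIndepFinset (clusterGraph β) S} :=
    Set.ext fun S => ⟨fun ⟨g, hg⟩ => hg ▸ isMaxIndepFinset_transversal g,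
      fun hS => hS.exists_transversal_eq hβ⟩
  rw [mis, ← hrange, ← Nat.card_coe_set_eq, Nat.card_range_of_injective transversal_injective,
    Nat.card_pi]

end ClusterGraph

theorem exists_not_hasInducedTriangleMatching_mis_eq {n : ℕ} (t r : ℕ)
    (hn : n = 3 * t + 2 * r) :
    ∃ G : SimpleGraph (Fin n),
      ¬ HasInducedTriangleMatching G (t + 1) ∧ mis G = 3 ^ t * 2 ^ r := by
  set size : Fin t ⊕ Fin r → ℕ := Sum.elim (fun _ => 3) (fun _ => 2)
  have hcard : Fintype.card (Fin n) = Fintype.card (Σ i, Fin (size i)) := by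
    simp [size, hn, mul_comm]
  let e := Fintype.equivOfCardEq hcard
  have hfiber : ∀ i, Nat.card {v // (e v).1 = i} = size i := fun i => by
    rw [Nat.card_congr ((e.subtypeEquiv fun _ => Iff.rfl).trans (Equiv.sigmaSubtype i)),
      Nat.card_eq_fintype_card, Fintype.card_fin]
  refine ⟨clusterGraph fun v => (e v).1, fun hG => ?_, ?_⟩
  · obtain ⟨f, hf⟩ := hasInducedTriangleMatching_iff.1 hG
    obtain ⟨g, hg, h3⟩ := hf.exists_injective_clusterGraph
    have hleft : ∀ j, ∃ a, g j = Sum.inl a := fun j => by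
      have := hfiber (g j) ▸ h3 j
      cases hgj : g j with
      | inl a => exact ⟨a, rfl⟩
      | inr b => simp [size, hgj] at this
    choose h hh using hleft
    have hinj : Function.Injective h := fun j l hjl => hg (by rw [hh, hh, hjl])
    simpa using Fintype.card_le_of_injective h hinj
  · have hsurj : Function.Surjective fun v => (e v).1 := fun i =>
      ⟨e.symm ⟨i, ⟨0, by cases i <;> simp [size]⟩⟩, by simp⟩
    rw [mis_clusterGraph hsurj, Fintype.prod_sum_type]
    simp only [hfiber, size, Sum.elim_inl, Sum.elim_inr, Finset.prod_const, Finset.card_univ,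
      Fintype.card_fin]

theorem mis_max_no_induced_triangle_matching_even (n t : ℕ) (ht : 3 * t ≤ n)
    (m : ℕ) (hm : m = n - 3 * t) (hme : Even m) :
    (∀ G : SimpleGraph (Fin n), ¬ HasInducedTriangleMatching G (t + 1) →
      mis G ≤ 3 ^ t * 2 ^ (m / 2)) ∧
    (∃ G : SimpleGraph (Fin n), ¬ HasInducedTriangleMatching G (t + 1) ∧
      mis G = 3 ^ t * 2 ^ (m / 2)) := by
  obtain ⟨r, rfl⟩ := hme
  have hn : n = 3 * t + 2 * ((r + r) / 2) := by omega
  refine ⟨fun G hG => mis_le_of_not_hasInducedTriangleMatching G ?_ hG,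
    exists_not_hasInducedTriangleMatching_mis_eq t _ hn⟩
  rw [Nat.card_eq_fintype_card, Fintype.card_fin, hn]
end

section
/- Let n ≥ 5 be an odd integer. Then the maximum of mis(G) over all simple graphs G on n vertices that contain no induced triangle matching of size 1 (equivalently, over all triangle-free graphs on n vertices) equals 5 · 2^{(n−5)/2}; that is, every such graph G satisfies mis(G) ≤ 5 · 2^{(n−5)/2}, and some such graph attains this value. -/
/-!
The upper bound is proved by induction on the number of vertices. A maximal independent set
`S ⊇ T` with `S ∩ X = ∅` restricts to a maximal independent set of `G - (X ∪ N[T])`, and `S` is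
recovered from the restriction; so if every maximal independent set of `G` lies in one of a few
such classes, `mis G ≤ ∑ misBound (n - |X ∪ N[T]|)`. Branch at a vertex `v` of minimum degree
`d`: the classes "`w ∈ S`", `w ∈ N[v]`, give `(d + 1) * misBound (n - d - 1) ≤ misBound n`
unless `d = 2`. For `d = 2` triangle-freeness enters: either some degree-2 vertex has a
neighbour of degree at least 3, or `v` lies on a cycle of degree-2 vertices, which is a `C₄`,
a `C₅` or contains an induced path on six vertices; each case has its own branching.

The bound is attained by `C₅` plus `(n - 5) / 2` disjoint edges, since `mis` is multiplicative
over disjoint unions.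
-/

open Finset

/-- `misBound n` is `2 ^ (n / 2)` for even `n` and `5 * 2 ^ ((n - 5) / 2)` for odd `n ≥ 5`. -/
def misBound : ℕ → ℕ
  | 0 => 1
  | 1 => 1
  | 2 => 2
  | 3 => 2
  | 4 => 4
  | 5 => 5
  | n + 6 => 2 * misBound (n + 4)

namespace misBound

theorem le_succ : ∀ n, misBound n ≤ misBound (n + 1)
  | 0 | 1 | 2 | 3 | 4 | 5 => by decide
  | n + 6 => by
    show 2 * misBound (n + 4) ≤ 2 * misBound (n + 5)
    have : misBound (n + 4) ≤ misBound (n + 5) := le_succ (n + 4)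
    omega

theorem monotone : Monotone misBound := monotone_nat_of_le_succ le_succ

theorem two_mul_le : ∀ m, 2 * misBound m ≤ misBound (m + 2)
  | 0 | 1 | 2 | 3 => by decide
  | _ + 4 => le_rfl

theorem five_mul_le : ∀ m, 5 * misBound m ≤ misBound (m + 5)
  | 0 | 1 | 2 | 3 | 4 | 5 => by decide
  | m + 6 => by
    show 5 * (2 * misBound (m + 4)) ≤ 2 * misBound (m + 9)
    have : 5 * misBound (m + 4) ≤ misBound (m + 9) := five_mul_le (m + 4)
    omega

/-- This fails for `k = 3` (`3 * misBound 2 > misBound 5`), which is why minimum degree `2`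
needs a separate argument. -/
theorem mul_le : ∀ k, k ≠ 3 → ∀ m, k * misBound m ≤ misBound (m + k)
  | 0, _, _ => by simp
  | 1, _, m => by simpa using le_succ m
  | 2, _, m => two_mul_le m
  | 4, _, m => by
    have h₁ := two_mul_le m
    have h₂ : 2 * misBound (m + 2) ≤ misBound (m + 4) := two_mul_le (m + 2)
    omega
  | 5, _, m => five_mul_le m
  | k + 6, _, m => by
    have h₁ := mul_le (k + 4) (by omega) m
    have h₂ : 2 * misBound (m + (k + 4)) ≤ misBound (m + (k + 6)) := two_mul_le _
    calc (k + 6) * misBound m ≤ 2 * ((k + 4) * misBound m) := by nlinarith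
      _ ≤ misBound (m + (k + 6)) := by omega

theorem add_one_add_two_mul_le (m : ℕ) :
    misBound (m + 1) + 2 * misBound m ≤ misBound (m + 4) := by
  have h₁ : misBound (m + 1) ≤ misBound (m + 2) := le_succ (m + 1)
  have h₂ := two_mul_le m
  have h₃ : 2 * misBound (m + 2) ≤ misBound (m + 4) := two_mul_le (m + 2)
  omega

theorem sum_four_le : ∀ m,
    misBound (m + 3) + misBound (m + 2) + misBound (m + 1) + misBound m ≤ misBound (m + 6)
  | 0 | 1 | 2 | 3 | 4 | 5 => by decide
  | m + 6 => by
    show 2 * misBound (m + 7) + 2 * misBound (m + 6) + 2 * misBound (m + 5) +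
      2 * misBound (m + 4) ≤ 2 * misBound (m + 10)
    have : misBound (m + 7) + misBound (m + 6) + misBound (m + 5) + misBound (m + 4) ≤
        misBound (m + 10) := sum_four_le (m + 4)
    omega

theorem five_add_two_mul : ∀ k, misBound (5 + 2 * k) = 5 * 2 ^ k
  | 0 => rfl
  | k + 1 => by
    rw [show 5 + 2 * (k + 1) = 2 * k + 1 + 6 by ring, misBound,
      show 2 * k + 1 + 4 = 5 + 2 * k by ring, five_add_two_mul k, pow_succ]
    ring

end misBound

section MaxIndep

variable {V W : Type*} {G : SimpleGraph V} {H : SimpleGraph W}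

theorem isMaxIndepFinset_iff {S : Finset V} :
    IsMaxIndepFinset G S ↔ IsIndepFinset G S ∧ ∀ x ∉ S, ∃ s ∈ S, G.Adj x s := by
  classical
  refine ⟨fun h => ⟨h.1, fun x hx => ?_⟩, fun h => ⟨h.1, fun t ht hSt => ?_⟩⟩
  · by_contra! hxS
    have hins : IsIndepFinset G (insert x S) := by
      intro a ha b hb
      rw [mem_insert] at ha hb
      rcases ha with rfl | ha <;> rcases hb with rfl | hb
      · exact G.irrefl
      · exact hxS b hb
      · exact fun hab => hxS a ha hab.symm
      · exact h.1 ha hb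
    exact hx (h.2 _ hins (subset_insert x S) ▸ mem_insert_self x S)
  · refine Subset.antisymm hSt fun x hxt => ?_
    by_contra hxS
    obtain ⟨s, hs, hxs⟩ := h.2 x hxS
    exact ht hxt (hSt hs) hxs

theorem IsMaxIndepFinset.exists_adj {S : Finset V} (hS : IsMaxIndepFinset G S) {x : V}
    (hx : x ∉ S) : ∃ s ∈ S, G.Adj x s :=
  (isMaxIndepFinset_iff.1 hS).2 x hx

theorem IsIndepFinset.notMem_or_notMem {S : Finset V} (hS : IsIndepFinset G S) {a b : V}
    (hab : G.Adj a b) : a ∉ S ∨ b ∉ S := by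
  by_contra! h
  exact hS h.1 h.2 hab

theorem isMaxIndepFinset_map_iff (e : G ≃g H) {S : Finset V} :
    IsMaxIndepFinset H (S.map e.toEquiv.toEmbedding) ↔ IsMaxIndepFinset G S := by
  have h : ∀ x, e.toEquiv.symm (e x) = x := e.toEquiv.symm_apply_apply
  simp [isMaxIndepFinset_iff, IsIndepFinset, e.surjective.forall, e.surjective.exists, h,
    e.map_adj_iff]

theorem mis_congr (e : G ≃g H) : mis G = mis H := by
  have : {T | IsMaxIndepFinset H T} = e.toEquiv.finsetCongr '' {S | IsMaxIndepFinset G S} := by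
    ext T
    obtain ⟨S, rfl⟩ := e.toEquiv.finsetCongr.surjective T
    rw [e.toEquiv.finsetCongr.injective.mem_set_image]
    exact isMaxIndepFinset_map_iff e
  rw [mis, mis, this, Set.ncard_image_of_injective _ (Equiv.injective _)]

theorem isMaxIndepFinset_disjSum_iff {S : Finset V} {T : Finset W} :
    IsMaxIndepFinset (G ⊕g H) (S.disjSum T) ↔ IsMaxIndepFinset G S ∧ IsMaxIndepFinset H T := by
  simp only [isMaxIndepFinset_iff, IsIndepFinset, SimpleGraph.sum_adj, Sum.forall, Sum.exists,
    inl_mem_disjSum, inr_mem_disjSum, not_false_eq_true, implies_true, and_true, true_and,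
    and_false, exists_false, or_false, false_or]
  tauto

theorem mis_sum : mis (G ⊕g H) = mis G * mis H := by
  have : {U | IsMaxIndepFinset (G ⊕g H) U} =
      sumEquiv.symm '' ({S | IsMaxIndepFinset G S} ×ˢ {T | IsMaxIndepFinset H T}) := by
    ext U
    obtain ⟨⟨S, T⟩, rfl⟩ := sumEquiv.symm.surjective U
    simp [isMaxIndepFinset_disjSum_iff]
  rw [mis, this, Set.ncard_image_of_injective _ sumEquiv.symm.injective, Set.ncard_prod, mis, mis]

theorem mis_eq_card_filter [Fintype V] [DecidableEq V] [DecidableRel G.Adj] :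
    mis G = #{S : Finset V | (∀ a ∈ S, ∀ b ∈ S, ¬ G.Adj a b) ∧ ∀ x ∉ S, ∃ s ∈ S, G.Adj x s} := by
  rw [mis, ← Set.ncard_coe_finset]
  congr 1
  ext S
  simp [isMaxIndepFinset_iff, IsIndepFinset]

end MaxIndep

namespace SimpleGraph

variable {V W : Type*} {G : SimpleGraph V} {H : SimpleGraph W}

theorem cliqueFree_three_iff :
    G.CliqueFree 3 ↔ ∀ a b c, G.Adj a b → G.Adj b c → ¬ G.Adj a c := by
  classical
  refine ⟨fun h a b c hab hbc hac => h {a, b, c} (is3Clique_triple_iff.2 ⟨hab, hac, hbc⟩),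
    fun h t ht => ?_⟩
  obtain ⟨a, b, c, -, -, -, rfl⟩ := card_eq_three.1 ht.card_eq
  obtain ⟨hab, hac, hbc⟩ := is3Clique_triple_iff.1 ht
  exact h a b c hab hbc hac

theorem CliqueFree.not_adj_of_adj_of_adj (hG : G.CliqueFree 3) {a b c : V} (hab : G.Adj a b)
    (hbc : G.Adj b c) : ¬ G.Adj a c :=
  cliqueFree_three_iff.1 hG a b c hab hbc

theorem CliqueFree.sum_three (hG : G.CliqueFree 3) (hH : H.CliqueFree 3) :
    (G ⊕g H).CliqueFree 3 := by
  rw [cliqueFree_three_iff] at *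
  rintro (a | a) (b | b) (c | c) <;> simp only [sum_adj] <;> tauto

end SimpleGraph

theorem List.Nodup.length_le_card_of_forall_mem {V : Type*} [DecidableEq V] {l : List V}
    (hl : l.Nodup) {R : Finset V} (h : ∀ x ∈ l, x ∈ R) : l.length ≤ #R :=
  (List.toFinset_card_of_nodup hl).symm.le.trans
    (card_le_card fun x hx => h x (List.mem_toFinset.1 hx))

section Branching

variable {V : Type*} [Fintype V] {G : SimpleGraph V}

def misClass (G : SimpleGraph V) (T X : Finset V) : Set (Finset V) :=
  {S | IsMaxIndepFinset G S ∧ T ⊆ S ∧ Disjoint X S}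

theorem mis_le_sum_ncard_misClass {ι : Type*} (s : Finset ι) (T X : ι → Finset V)
    (h : ∀ S, IsMaxIndepFinset G S → ∃ i ∈ s, T i ⊆ S ∧ Disjoint (X i) S) :
    mis G ≤ ∑ i ∈ s, (misClass G (T i) (X i)).ncard := by
  refine (Set.ncard_le_ncard (fun S hS => ?_) (Set.toFinite _)).trans
    (s.set_ncard_biUnion_le fun i => misClass G (T i) (X i))
  obtain ⟨i, hi, hTS, hXS⟩ := h S hS
  exact Set.mem_biUnion hi ⟨hS, hTS, hXS⟩

variable [DecidableEq V] [DecidableRel G.Adj]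

def closedNbhd (G : SimpleGraph V) [DecidableRel G.Adj] (T : Finset V) : Finset V :=
  T.biUnion fun t => insert t (G.neighborFinset t)

theorem card_closedNbhd_singleton (v : V) : #(closedNbhd G {v}) = G.degree v + 1 := by
  rw [closedNbhd, singleton_biUnion, card_insert_of_notMem (by simp),
    G.card_neighborFinset_eq_degree]

theorem card_insert_closedNbhd_singleton {a b : V} (hab : a ≠ b) (hba : ¬ G.Adj b a) :
    #(insert a (closedNbhd G {b})) = G.degree b + 2 := by
  rw [card_insert_of_notMem, card_closedNbhd_singleton]
  simpa [closedNbhd, hab] using hba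

theorem ncard_misClass_le_mis_induce (T X : Finset V) :
    (misClass G T X).ncard ≤ mis (G.induce (↑(X ∪ closedNbhd G T))ᶜ) := by
  set R := X ∪ closedNbhd G T
  have hmemR : ∀ {y}, y ∈ R ↔ y ∈ X ∨ ∃ t ∈ T, y = t ∨ G.Adj t y := by
    simp [R, closedNbhd]
  have hinter : ∀ S ∈ misClass G T X, ∀ y ∈ S, y ∈ R → y ∈ T := by
    rintro S ⟨hS, hTS, hXS⟩ y hy hyR
    obtain hyX | ⟨t, ht, rfl | hty⟩ := hmemR.1 hyR
    · exact absurd hy (disjoint_left.1 hXS hyX)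
    · exact ht
    · exact absurd hty (hS.1 (hTS ht) hy)
  refine Set.ncard_le_ncard_of_injOn (fun S => S.subtype (· ∈ (↑R : Set V)ᶜ)) ?_ ?_
    (Set.toFinite _)
  · intro S hS
    refine isMaxIndepFinset_iff.2 ⟨fun a ha b hb => hS.1.1 (mem_subtype.1 ha) (mem_subtype.1 hb),
      fun y hy => ?_⟩
    obtain ⟨s, hs, hys⟩ := hS.1.exists_adj (mt mem_subtype.2 hy)
    have hsR : s ∉ R := fun hsR =>
      y.2 (hmemR.2 (Or.inr ⟨s, hinter S hS s hs hsR, Or.inr hys.symm⟩))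
    exact ⟨⟨s, hsR⟩, mem_subtype.2 hs, hys⟩
  · intro S₁ h₁ S₂ h₂ h
    ext y
    by_cases hyR : y ∈ R
    · exact ⟨fun hy => h₂.2.1 (hinter S₁ h₁ y hy hyR), fun hy => h₁.2.1 (hinter S₂ h₂ y hy hyR)⟩
    · simpa using congrArg (⟨y, hyR⟩ ∈ ·) h

def MisBoundHereditary (G : SimpleGraph V) : Prop :=
  ∀ R : Finset V, R.Nonempty → mis (G.induce (↑R)ᶜ) ≤ misBound (Fintype.card V - #R)

theorem MisBoundHereditary.mis_le_sum {ι : Type*} (hG : MisBoundHereditary G) (s : Finset ι)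
    (T X : ι → Finset V) (c : ι → ℕ) (hT : ∀ i ∈ s, (T i).Nonempty)
    (hc : ∀ i ∈ s, c i ≤ #(X i ∪ closedNbhd G (T i)))
    (hcover : ∀ S, IsMaxIndepFinset G S → ∃ i ∈ s, T i ⊆ S ∧ Disjoint (X i) S) :
    mis G ≤ ∑ i ∈ s, misBound (Fintype.card V - c i) := by
  refine (mis_le_sum_ncard_misClass s T X hcover).trans (sum_le_sum fun i hi => ?_)
  obtain ⟨t, ht⟩ := hT i hi
  have hR : (X i ∪ closedNbhd G (T i)).Nonempty :=
    ⟨t, mem_union_right _ (mem_biUnion.2 ⟨t, ht, mem_insert_self _ _⟩)⟩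
  refine (ncard_misClass_le_mis_induce _ _).trans ((hG _ hR).trans (misBound.monotone ?_))
  have := hc i hi
  omega

end Branching

section DegreeTwo

variable {V : Type*} [Fintype V] [DecidableEq V] {G : SimpleGraph V} [DecidableRel G.Adj]

theorem exists_neighborFinset_eq_pair {x y : V} (hx : G.degree x = 2) (hxy : G.Adj x y) :
    ∃ z, z ≠ y ∧ G.neighborFinset x = {y, z} := by
  obtain ⟨u, w, huw, hN⟩ := card_eq_two.1 hx
  have hy : y ∈ G.neighborFinset x := by simpa using hxy
  rw [hN, mem_insert, mem_singleton] at hy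
  obtain rfl | rfl := hy
  · exact ⟨w, huw.symm, hN⟩
  · exact ⟨u, huw, hN.trans (pair_comm _ _)⟩

theorem adj_of_neighborFinset_eq_pair {x a b : V} (hN : G.neighborFinset x = {a, b}) :
    G.Adj x a ∧ G.Adj x b := by
  simp only [← G.mem_neighborFinset, hN, mem_insert, mem_singleton, true_or, or_true, and_self]

theorem eq_of_neighborFinset_eq_pair {x a b c : V} (hN : G.neighborFinset x = {a, b})
    (hxc : G.Adj x c) (hca : c ≠ a) : c = b := by
  have : c ∈ G.neighborFinset x := by simpa using hxc
  rw [hN, mem_insert, mem_singleton] at this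
  exact this.resolve_left hca

theorem IsMaxIndepFinset.mem_or_mem_or_mem {S : Finset V} (hS : IsMaxIndepFinset G S)
    {x a b : V} (hN : G.neighborFinset x = {a, b}) : x ∈ S ∨ a ∈ S ∨ b ∈ S := by
  by_cases hx : x ∈ S
  · exact Or.inl hx
  · obtain ⟨s, hs, hxs⟩ := hS.exists_adj hx
    have : s ∈ G.neighborFinset x := by simpa using hxs
    rw [hN, mem_insert, mem_singleton] at this
    obtain rfl | rfl := this <;> tauto

end DegreeTwo

section Cases

variable {V : Type*} [Fintype V] [DecidableEq V] {G : SimpleGraph V} [DecidableRel G.Adj]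

theorem MisBoundHereditary.mis_le_of_minDegree_ne_two [Nonempty V] (hG : MisBoundHereditary G)
    (hd : G.minDegree ≠ 2) : mis G ≤ misBound (Fintype.card V) := by
  obtain ⟨v, hv⟩ := G.exists_minimal_degree_vertex
  set d := G.minDegree
  have hcover : ∀ S, IsMaxIndepFinset G S →
      ∃ w ∈ insert v (G.neighborFinset v), {w} ⊆ S ∧ Disjoint ∅ S := by
    intro S hS
    by_cases hvS : v ∈ S
    · exact ⟨v, mem_insert_self _ _, singleton_subset_iff.2 hvS, disjoint_empty_left _⟩
    · obtain ⟨s, hs, hvs⟩ := hS.exists_adj hvS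
      exact ⟨s, mem_insert_of_mem (by simpa using hvs), singleton_subset_iff.2 hs,
        disjoint_empty_left _⟩
  have hc : ∀ w ∈ insert v (G.neighborFinset v), d + 1 ≤ #(∅ ∪ closedNbhd G {w}) := by
    intro w _
    rw [empty_union, card_closedNbhd_singleton]
    exact Nat.succ_le_succ (G.minDegree_le_degree w)
  have hdn : d + 1 ≤ Fintype.card V := by
    rw [hv, ← card_closedNbhd_singleton]
    exact card_le_univ _
  calc mis G ≤ ∑ w ∈ insert v (G.neighborFinset v), misBound (Fintype.card V - (d + 1)) :=
        hG.mis_le_sum _ _ _ _ (fun _ _ => singleton_nonempty _) hc hcover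
    _ = (d + 1) * misBound (Fintype.card V - (d + 1)) := by
        rw [sum_const, smul_eq_mul, card_insert_of_notMem (by simp),
          G.card_neighborFinset_eq_degree, hv]
    _ ≤ misBound (Fintype.card V - (d + 1) + (d + 1)) := misBound.mul_le _ (by omega) _
    _ = misBound (Fintype.card V) := by rw [Nat.sub_add_cancel hdn]

theorem MisBoundHereditary.mis_le_of_degree_two_adj (hG : MisBoundHereditary G)
    (htri : G.CliqueFree 3) (hmin : 2 ≤ G.minDegree) {v a : V} (hv : G.degree v = 2)
    (hva : G.Adj v a) (ha : 3 ≤ G.degree a) : mis G ≤ misBound (Fintype.card V) := by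
  obtain ⟨b, hba, hN⟩ := exists_neighborFinset_eq_pair hv hva
  have hvb : G.Adj v b := by simpa using hN.ge (mem_insert_of_mem (mem_singleton_self b))
  have hc : 3 ≤ #(closedNbhd G {v}) ∧ 4 ≤ #(closedNbhd G {a}) ∧
      4 ≤ #(insert a (closedNbhd G {b})) := by
    rw [card_closedNbhd_singleton, card_closedNbhd_singleton,
      card_insert_closedNbhd_singleton hba.symm (htri.not_adj_of_adj_of_adj hvb.symm hva)]
    have := G.minDegree_le_degree b
    omega
  have hn : 4 ≤ Fintype.card V := hc.2.1.trans (card_le_univ _)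
  have hcover : ∀ S, IsMaxIndepFinset G S → v ∈ S ∨ a ∈ S ∨ b ∈ S ∧ a ∉ S := by
    intro S hS
    have := hS.mem_or_mem_or_mem hN
    tauto
  have key := hG.mis_le_sum univ ![{v}, {a}, {b}] ![∅, ∅, {a}] ![3, 4, 4]
    (by simp [Fin.forall_fin_succ]) (by simpa [Fin.forall_fin_succ] using hc)
    (by simpa [Fin.exists_fin_succ] using hcover)
  have hB := misBound.add_one_add_two_mul_le (Fintype.card V - 4)
  rw [show Fintype.card V - 4 + 1 = Fintype.card V - 3 by omega,
    show Fintype.card V - 4 + 4 = Fintype.card V by omega] at hB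
  simp only [Fin.sum_univ_three, Matrix.cons_val_zero, Matrix.cons_val_one, Matrix.cons_val] at key
  omega

theorem MisBoundHereditary.mis_le_of_square (hG : MisBoundHereditary G) {p₀ p₁ p₂ p₃ : V}
    (hN₀ : G.neighborFinset p₀ = {p₃, p₁}) (hN₁ : G.neighborFinset p₁ = {p₀, p₂})
    (hN₂ : G.neighborFinset p₂ = {p₁, p₃}) (hN₃ : G.neighborFinset p₃ = {p₂, p₀})
    (hp : [p₀, p₁, p₂, p₃].Nodup) : mis G ≤ misBound (Fintype.card V) := by
  have hadj : G.Adj p₀ p₁ ∧ G.Adj p₁ p₂ ∧ G.Adj p₂ p₃ ∧ G.Adj p₃ p₀ :=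
    ⟨(adj_of_neighborFinset_eq_pair hN₀).2, (adj_of_neighborFinset_eq_pair hN₁).2,
      (adj_of_neighborFinset_eq_pair hN₂).2, (adj_of_neighborFinset_eq_pair hN₃).2⟩
  have hc : 4 ≤ #(closedNbhd G {p₀, p₂}) ∧ 4 ≤ #(closedNbhd G {p₁, p₃}) :=
    ⟨hp.length_le_card_of_forall_mem (by simp [closedNbhd, hN₀, hN₂]),
      hp.length_le_card_of_forall_mem (by simp [closedNbhd, hN₁, hN₃])⟩
  have hn : 4 ≤ Fintype.card V := hc.1.trans (card_le_univ _)
  have hcover : ∀ S, IsMaxIndepFinset G S → p₀ ∈ S ∧ p₂ ∈ S ∨ p₁ ∈ S ∧ p₃ ∈ S := by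
    intro S hS
    have := hS.mem_or_mem_or_mem hN₀
    have := hS.mem_or_mem_or_mem hN₁
    have := hS.mem_or_mem_or_mem hN₂
    have := hS.mem_or_mem_or_mem hN₃
    have := hS.1.notMem_or_notMem hadj.1
    have := hS.1.notMem_or_notMem hadj.2.1
    have := hS.1.notMem_or_notMem hadj.2.2.1
    have := hS.1.notMem_or_notMem hadj.2.2.2
    grind
  have key := hG.mis_le_sum univ ![{p₀, p₂}, {p₁, p₃}] ![∅, ∅] ![4, 4]
    (by simp [Fin.forall_fin_succ]) (by simpa [Fin.forall_fin_succ] using hc)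
    (by simpa [Fin.exists_fin_succ, insert_subset_iff] using hcover)
  have h₁ := misBound.two_mul_le (Fintype.card V - 4)
  have h₂ := misBound.monotone (show Fintype.card V - 4 + 2 ≤ Fintype.card V by omega)
  simp only [Fin.sum_univ_two, Matrix.cons_val_zero, Matrix.cons_val_one] at key
  omega

theorem MisBoundHereditary.mis_le_of_pentagon (hG : MisBoundHereditary G) {p₀ p₁ p₂ p₃ p₄ : V}
    (hN₀ : G.neighborFinset p₀ = {p₄, p₁}) (hN₁ : G.neighborFinset p₁ = {p₀, p₂})
    (hN₂ : G.neighborFinset p₂ = {p₁, p₃}) (hN₃ : G.neighborFinset p₃ = {p₂, p₄})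
    (hN₄ : G.neighborFinset p₄ = {p₃, p₀}) (hp : [p₀, p₁, p₂, p₃, p₄].Nodup) :
    mis G ≤ misBound (Fintype.card V) := by
  have hc : 5 ≤ #(closedNbhd G {p₀, p₂}) ∧ 5 ≤ #(closedNbhd G {p₁, p₃}) ∧
      5 ≤ #(closedNbhd G {p₂, p₄}) ∧ 5 ≤ #(closedNbhd G {p₃, p₀}) ∧
      5 ≤ #(closedNbhd G {p₄, p₁}) :=
    ⟨hp.length_le_card_of_forall_mem (by simp [closedNbhd, hN₀, hN₂]),
      hp.length_le_card_of_forall_mem (by simp [closedNbhd, hN₁, hN₃]),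
      hp.length_le_card_of_forall_mem (by simp [closedNbhd, hN₂, hN₄]),
      hp.length_le_card_of_forall_mem (by simp [closedNbhd, hN₃, hN₀]),
      hp.length_le_card_of_forall_mem (by simp [closedNbhd, hN₄, hN₁])⟩
  have hn : 5 ≤ Fintype.card V := hc.1.trans (card_le_univ _)
  have hcover : ∀ S, IsMaxIndepFinset G S → p₀ ∈ S ∧ p₂ ∈ S ∨ p₁ ∈ S ∧ p₃ ∈ S ∨
      p₂ ∈ S ∧ p₄ ∈ S ∨ p₃ ∈ S ∧ p₀ ∈ S ∨ p₄ ∈ S ∧ p₁ ∈ S := by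
    intro S hS
    have := hS.mem_or_mem_or_mem hN₀
    have := hS.mem_or_mem_or_mem hN₁
    have := hS.mem_or_mem_or_mem hN₂
    have := hS.mem_or_mem_or_mem hN₃
    have := hS.mem_or_mem_or_mem hN₄
    have := hS.1.notMem_or_notMem (adj_of_neighborFinset_eq_pair hN₀).2
    have := hS.1.notMem_or_notMem (adj_of_neighborFinset_eq_pair hN₁).2
    have := hS.1.notMem_or_notMem (adj_of_neighborFinset_eq_pair hN₂).2
    have := hS.1.notMem_or_notMem (adj_of_neighborFinset_eq_pair hN₃).2
    have := hS.1.notMem_or_notMem (adj_of_neighborFinset_eq_pair hN₄).2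
    grind
  have key := hG.mis_le_sum univ ![{p₀, p₂}, {p₁, p₃}, {p₂, p₄}, {p₃, p₀}, {p₄, p₁}]
    ![∅, ∅, ∅, ∅, ∅] ![5, 5, 5, 5, 5]
    (by simp [Fin.forall_fin_succ]) (by simpa [Fin.forall_fin_succ] using hc)
    (by simpa [Fin.exists_fin_succ, insert_subset_iff] using hcover)
  have hB := misBound.five_mul_le (Fintype.card V - 5)
  rw [Nat.sub_add_cancel hn] at hB
  simp only [Fin.sum_univ_five, Matrix.cons_val_zero, Matrix.cons_val_one, Matrix.cons_val] at key
  omega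

theorem MisBoundHereditary.mis_le_of_path (hG : MisBoundHereditary G) (htri : G.CliqueFree 3)
    (hmin : 2 ≤ G.minDegree) {p₀ p₁ p₂ p₃ p₄ p₅ : V}
    (hN₁ : G.neighborFinset p₁ = {p₀, p₂}) (hN₃ : G.neighborFinset p₃ = {p₂, p₄})
    (h₄₅ : G.Adj p₄ p₅) (hp : [p₀, p₁, p₂, p₃, p₄, p₅].Nodup) :
    mis G ≤ misBound (Fintype.card V) := by
  obtain ⟨h₁₀, h₁₂⟩ := adj_of_neighborFinset_eq_pair hN₁
  obtain ⟨h₃₂, h₃₄⟩ := adj_of_neighborFinset_eq_pair hN₃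
  have hc : 5 ≤ #(closedNbhd G {p₁, p₃}) ∧ 6 ≤ #({p₃} ∪ closedNbhd G {p₁, p₄}) ∧
      3 ≤ #(closedNbhd G {p₂}) ∧ 4 ≤ #({p₂} ∪ closedNbhd G {p₀}) := by
    have hp' : [p₀, p₁, p₂, p₃, p₄].Nodup := List.Nodup.sublist (by simp) hp
    refine ⟨hp'.length_le_card_of_forall_mem ?_, hp.length_le_card_of_forall_mem ?_, ?_, ?_⟩
    · simp [closedNbhd, hN₁, hN₃]
    · simp [closedNbhd, hN₁, h₃₄.symm, h₄₅]
    · rw [card_closedNbhd_singleton]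
      have := G.minDegree_le_degree p₂
      omega
    · rw [← insert_eq, card_insert_closedNbhd_singleton (by intro h; simp [h] at hp)
        (htri.not_adj_of_adj_of_adj h₁₀.symm h₁₂)]
      have := G.minDegree_le_degree p₀
      omega
  have hn : 6 ≤ Fintype.card V := hc.2.1.trans (card_le_univ _)
  -- If `p₀, p₂ ∉ S`, then domination of `p₁` and of `p₃` forces `p₁ ∈ S` and `p₃ ∈ S ∨ p₄ ∈ S`.
  have hcover : ∀ S, IsMaxIndepFinset G S → p₁ ∈ S ∧ p₃ ∈ S ∨ (p₁ ∈ S ∧ p₄ ∈ S) ∧ p₃ ∉ S ∨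
      p₂ ∈ S ∨ p₀ ∈ S ∧ p₂ ∉ S := by
    intro S hS
    have := hS.mem_or_mem_or_mem hN₁
    have := hS.mem_or_mem_or_mem hN₃
    have := hS.1.notMem_or_notMem h₁₂
    have := hS.1.notMem_or_notMem h₃₂
    grind
  have key := hG.mis_le_sum univ ![{p₁, p₃}, {p₁, p₄}, {p₂}, {p₀}] ![∅, {p₃}, ∅, {p₂}] ![5, 6, 3, 4]
    (by simp [Fin.forall_fin_succ]) (by simpa [Fin.forall_fin_succ] using hc)
    (by simpa [Fin.exists_fin_succ, insert_subset_iff] using hcover)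
  have hB := misBound.sum_four_le (Fintype.card V - 6)
  rw [show Fintype.card V - 6 + 3 = Fintype.card V - 3 by omega,
    show Fintype.card V - 6 + 2 = Fintype.card V - 4 by omega,
    show Fintype.card V - 6 + 1 = Fintype.card V - 5 by omega, Nat.sub_add_cancel hn] at hB
  simp only [Fin.sum_univ_four, Matrix.cons_val_zero, Matrix.cons_val_one, Matrix.cons_val] at key
  omega

theorem MisBoundHereditary.mis_le_of_degree_two_closed (hG : MisBoundHereditary G)
    (htri : G.CliqueFree 3) (hmin : 2 ≤ G.minDegree)
    (hclosed : ∀ x y, G.degree x = 2 → G.Adj x y → G.degree y = 2) {p₁ : V}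
    (hp₁ : G.degree p₁ = 2) : mis G ≤ misBound (Fintype.card V) := by
  have htri' : ∀ a b c, G.Adj a b → G.Adj b c → ¬ G.Adj a c :=
    fun _ _ _ => htri.not_adj_of_adj_of_adj
  obtain ⟨p₀, p₂, h₀₂, hN₁⟩ := card_eq_two.1 hp₁
  obtain ⟨h₁₀, h₁₂⟩ := adj_of_neighborFinset_eq_pair hN₁
  have hp₂ := hclosed _ _ hp₁ h₁₂
  obtain ⟨p₃, h₃₁, hN₂⟩ := exists_neighborFinset_eq_pair hp₂ h₁₂.symm
  have h₂₃ := (adj_of_neighborFinset_eq_pair hN₂).2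
  have hp₃ := hclosed _ _ hp₂ h₂₃
  obtain ⟨p₄, h₄₂, hN₃⟩ := exists_neighborFinset_eq_pair hp₃ h₂₃.symm
  have h₃₄ := (adj_of_neighborFinset_eq_pair hN₃).2
  obtain ⟨q, -, hN₀⟩ := exists_neighborFinset_eq_pair (hclosed _ _ hp₁ h₁₀) h₁₀.symm
  obtain ⟨p₅, h₅₃, hN₄⟩ := exists_neighborFinset_eq_pair (hclosed _ _ hp₃ h₃₄) h₃₄.symm
  have h₄₅ := (adj_of_neighborFinset_eq_pair hN₄).2
  -- The walk `p₀ p₁ ⋯ p₅` through degree-2 vertices closes up into a `C₄` or a `C₅`,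
  -- or else its six vertices are distinct.
  by_cases h₄₀ : p₄ = p₀
  · subst h₄₀
    obtain rfl := (eq_of_neighborFinset_eq_pair hN₀ h₃₄.symm h₃₁).symm
    refine hG.mis_le_of_square (hN₀.trans (pair_comm _ _)) hN₁ hN₂ hN₃ ?_
    simp only [List.nodup_cons, List.mem_cons, List.not_mem_nil, List.nodup_nil, or_false, not_or]
    grind [SimpleGraph.adj_comm]
  by_cases h₅₀ : p₅ = p₀
  · subst h₅₀
    obtain rfl := (eq_of_neighborFinset_eq_pair hN₀ h₄₅.symm
      fun h => htri' _ _ _ h₁₂ h₂₃ (h ▸ h₃₄).symm).symm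
    refine hG.mis_le_of_pentagon (hN₀.trans (pair_comm _ _)) hN₁ hN₂ hN₃ hN₄ ?_
    simp only [List.nodup_cons, List.mem_cons, List.not_mem_nil, List.nodup_nil, or_false, not_or]
    grind [SimpleGraph.adj_comm]
  have h₅₁ : p₅ ≠ p₁ := fun h => h₄₂ (eq_of_neighborFinset_eq_pair hN₁ (h ▸ h₄₅).symm h₄₀)
  refine hG.mis_le_of_path htri hmin hN₁ hN₃ h₄₅ ?_
  simp only [List.nodup_cons, List.mem_cons, List.not_mem_nil, List.nodup_nil, or_false, not_or]
  grind [SimpleGraph.adj_comm]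

end Cases

theorem mis_le_misBound {V : Type*} [Finite V] (G : SimpleGraph V) (hG : G.CliqueFree 3) :
    mis G ≤ misBound (Nat.card V) := by
  induction hn : Nat.card V using Nat.strong_induction_on generalizing V with
  | _ n ih =>
  classical
  have := Fintype.ofFinite V
  subst hn
  have hH : MisBoundHereditary G := by
    intro R hR
    have hcard : Nat.card ↥(↑R : Set V)ᶜ = Fintype.card V - #R := by
      rw [Nat.card_coe_set_eq, Set.ncard_compl, Set.ncard_coe_finset, Nat.card_eq_fintype_card]
    have hlt : Fintype.card V - #R < Nat.card V := by
      rw [Nat.card_eq_fintype_card]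
      have := hR.card_pos
      have := card_le_univ R
      omega
    rw [← hcard]
    exact ih _ (hcard ▸ hlt) (G.induce _)
      (hG.comap (SimpleGraph.Embedding.induce _).isContained) rfl
  rw [Nat.card_eq_fintype_card]
  rcases isEmpty_or_nonempty V with hV | hV
  · rw [Fintype.card_eq_zero]
    exact Set.ncard_le_one_of_subsingleton (α := Finset V) _
  by_cases hd : G.minDegree = 2
  · by_cases hmixed : ∃ v a, G.degree v = 2 ∧ G.Adj v a ∧ 3 ≤ G.degree a
    · obtain ⟨v, a, hv, hva, ha⟩ := hmixed
      exact hH.mis_le_of_degree_two_adj hG hd.ge hv hva ha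
    · push Not at hmixed
      obtain ⟨v, hv⟩ := G.exists_minimal_degree_vertex
      refine hH.mis_le_of_degree_two_closed hG hd.ge (fun x y hx hxy => ?_) (hv ▸ hd)
      have := G.minDegree_le_degree y
      have := hmixed x y hx hxy
      omega
  · exact hH.mis_le_of_minDegree_ne_two hd

theorem mis_cycleGraph_five : mis (SimpleGraph.cycleGraph 5) = 5 := by
  rw [mis_eq_card_filter]
  decide

theorem cliqueFree_three_cycleGraph_five : (SimpleGraph.cycleGraph 5).CliqueFree 3 :=
  SimpleGraph.cliqueFree_three_iff.2 (by decide)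

theorem mis_top_fin_two : mis (⊤ : SimpleGraph (Fin 2)) = 2 := by
  rw [mis_eq_card_filter]
  decide

theorem exists_cliqueFree_three_mis_eq (k : ℕ) :
    ∃ G : SimpleGraph (Fin (5 + 2 * k)), G.CliqueFree 3 ∧ mis G = 5 * 2 ^ k := by
  induction k with
  | zero => exact ⟨_, cliqueFree_three_cycleGraph_five, mis_cycleGraph_five⟩
  | succ k ih =>
    obtain ⟨G, hG, hmis⟩ := ih
    let e := SimpleGraph.Iso.map (finSumFinEquiv (m := 5 + 2 * k) (n := 2)) (G ⊕g ⊤)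
    refine ⟨_, ?_, (mis_congr e).symm.trans ?_⟩
    · exact (hG.sum_three (SimpleGraph.cliqueFree_of_card_lt (by simp))).comap
        e.symm.toEmbedding.isContained
    · rw [mis_sum, hmis, mis_top_fin_two, pow_succ, mul_assoc]

theorem hasInducedTriangleMatching_one_iff {V : Type*} {G : SimpleGraph V} :
    HasInducedTriangleMatching G 1 ↔ ¬ G.CliqueFree 3 := by
  simp only [SimpleGraph.CliqueFree, not_forall, not_not]
  constructor
  · rintro ⟨f, hcard, -, hadj, -⟩
    exact ⟨f 0, ⟨fun a ha b hb hab => hadj 0 a ha b hb hab, hcard 0⟩⟩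
  · rintro ⟨t, ht⟩
    exact ⟨fun _ => t, fun _ => ht.card_eq, fun i j hij => absurd (Subsingleton.elim i j) hij,
      fun _ a ha b hb hab => ht.isClique ha hb hab,
      fun i j hij => absurd (Subsingleton.elim i j) hij⟩

theorem mis_max_no_induced_triangle_matching_t_zero_odd (n : ℕ) (hn : 5 ≤ n) (hodd : Odd n) :
    (∀ G : SimpleGraph (Fin n), ¬ HasInducedTriangleMatching G 1 →
      mis G ≤ 5 * 2 ^ ((n - 5) / 2)) ∧
    (∃ G : SimpleGraph (Fin n), ¬ HasInducedTriangleMatching G 1 ∧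
      mis G = 5 * 2 ^ ((n - 5) / 2)) := by
  obtain ⟨k, rfl⟩ : ∃ k, n = 5 + 2 * k := by
    obtain ⟨m, rfl⟩ := hodd
    exact ⟨m - 2, by omega⟩
  rw [show (5 + 2 * k - 5) / 2 = k by omega]
  refine ⟨fun G hG => ?_, ?_⟩
  · rw [hasInducedTriangleMatching_one_iff, not_not] at hG
    simpa [misBound.five_add_two_mul] using mis_le_misBound G hG
  · obtain ⟨G, hG, hmis⟩ := exists_cliqueFree_three_mis_eq k
    exact ⟨G, hasInducedTriangleMatching_one_iff.not.2 (not_not.2 hG), hmis⟩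
end

section
/- Let c denote the largest real root of the equation x^6 − 2x^2 − 2x − 1 = 0 (c ≈ 1.40759 < √2). Let n and t be nonnegative integers with 2t ≤ n, and let G be a triangle-free simple graph on n vertices that contains no induced matching of size t+1. Then mis(G) ≤ 2^t · c^{n−2t}. -/
open Finset

theorem Fin.cons_pairwise_of_symm {α : Type*} {n : ℕ} {r : α → α → Prop}
    (hr : ∀ x y, r x y → r y x) {a : α} {f : Fin n → α} (ha : ∀ j, r a (f j))
    (hf : ∀ i j, i ≠ j → r (f i) (f j)) :
    ∀ i j, i ≠ j →
      r ((Fin.cons a f : Fin (n + 1) → α) i) ((Fin.cons a f : Fin (n + 1) → α) j) := by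
  intro i j hij
  cases i using Fin.cases <;> cases j using Fin.cases
  · exact absurd rfl hij
  · exact ha _
  · exact hr _ _ (ha _)
  · exact hf _ _ fun h => hij (congrArg Fin.succ h)

section InducedMatchings

variable {V : Type*} (G : SimpleGraph V)

def HasInducedMatchingIn (W : Finset V) (k : ℕ) : Prop :=
  ∃ f : Fin k → Finset V, (∀ i, f i ⊆ W) ∧
    (∀ i, (f i).card = 2) ∧
    (∀ i j, i ≠ j → Disjoint (f i) (f j)) ∧
    (∀ i, ∀ a ∈ f i, ∀ b ∈ f i, a ≠ b → G.Adj a b) ∧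
    (∀ i j, i ≠ j → ∀ a ∈ f i, ∀ b ∈ f j, ¬ G.Adj a b)

variable {G}

theorem hasInducedMatchingIn_zero (W : Finset V) : HasInducedMatchingIn G W 0 :=
  ⟨Fin.elim0, fun i => i.elim0, fun i => i.elim0, fun i => i.elim0, fun i => i.elim0,
    fun i => i.elim0⟩

theorem HasInducedMatchingIn.mono {W W' : Finset V} {k : ℕ} (h : HasInducedMatchingIn G W' k)
    (hW : W' ⊆ W) : HasInducedMatchingIn G W k :=
  let ⟨f, hfW, hf⟩ := h
  ⟨f, fun i => (hfW i).trans hW, hf⟩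

theorem HasInducedMatchingIn.hasInducedMatching {W : Finset V} {k : ℕ}
    (h : HasInducedMatchingIn G W k) : HasInducedMatching G k :=
  let ⟨f, _, hf⟩ := h
  ⟨f, hf⟩

variable (G) [DecidableEq V] [DecidableRel G.Adj]

def closedNbhdIn (W : Finset V) (u : V) : Finset V := insert u (W.filter (G.Adj u))

variable {G}

theorem mem_closedNbhdIn {W : Finset V} {u w : V} :
    w ∈ closedNbhdIn G W u ↔ w = u ∨ w ∈ W ∧ G.Adj u w := by
  simp [closedNbhdIn]

theorem card_closedNbhdIn (W : Finset V) (u : V) :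
    #(closedNbhdIn G W u) = #(W.filter (G.Adj u)) + 1 :=
  card_insert_of_notMem fun h => G.irrefl (mem_filter.1 h).2

theorem closedNbhdIn_subset {W : Finset V} {u : V} (hu : u ∈ W) : closedNbhdIn G W u ⊆ W :=
  insert_subset hu (filter_subset _ _)

theorem closedNbhdIn_subset_of_filter_eq_singleton {W : Finset V} {u v : V} (hv : v ∈ W)
    (h : W.filter (G.Adj v) = {u}) : closedNbhdIn G W v ⊆ closedNbhdIn G W u := by
  obtain ⟨hu, hvu⟩ := mem_filter.1 (h ▸ mem_singleton_self u)
  rw [closedNbhdIn, h]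
  exact insert_subset (mem_closedNbhdIn.2 (Or.inr ⟨hv, hvu.symm⟩))
    (singleton_subset_iff.2 (mem_insert_self _ _))

theorem sdiff_closedNbhdIn_union_ssubset {W : Finset V} {u : V} (F : Finset V) (hu : u ∈ W) :
    W \ (closedNbhdIn G W u ∪ F) ⊂ W :=
  (ssubset_iff_of_subset sdiff_subset).2
    ⟨u, hu, fun h => (mem_sdiff.1 h).2 (mem_union_left _ (mem_insert_self _ _))⟩

theorem card_sdiff_closedNbhdIn_union {W F : Finset V} {u : V} (hu : u ∈ W) (hF : F ⊆ W)
    (hFu : Disjoint F (closedNbhdIn G W u)) :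
    #(W \ (closedNbhdIn G W u ∪ F)) + (#(W.filter (G.Adj u)) + 1 + #F) = #W := by
  rw [← card_closedNbhdIn, ← card_union_of_disjoint hFu.symm]
  exact card_sdiff_add_card_eq_card (union_subset (closedNbhdIn_subset hu) hF)

theorem HasInducedMatchingIn.succ_of_adj {W W' : Finset V} {x y : V} {k : ℕ}
    (h : HasInducedMatchingIn G W' k)
    (hW' : W' ⊆ W \ (closedNbhdIn G W x ∪ closedNbhdIn G W y))
    (hxy : G.Adj x y) (hx : x ∈ W) (hy : y ∈ W) : HasInducedMatchingIn G W (k + 1) := by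
  obtain ⟨f, hfW, hcard, hdisj, hadj, hnadj⟩ := h
  have hfar : ∀ j, ∀ b ∈ f j, b ≠ x ∧ b ≠ y ∧ ¬G.Adj x b ∧ ¬G.Adj y b := by
    intro j b hb
    have hb' := hW' (hfW j hb)
    simp only [mem_sdiff, mem_union, mem_closedNbhdIn] at hb'
    tauto
  refine ⟨Fin.cons {x, y} f, ?_, ?_, ?_, ?_, ?_⟩
  · refine Fin.cases (insert_subset hx (singleton_subset_iff.2 hy)) fun j => ?_
    exact (hfW j).trans (hW'.trans sdiff_subset)
  · exact Fin.cases (card_pair (G.ne_of_adj hxy)) hcard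
  · refine Fin.cons_pairwise_of_symm (fun _ _ h => h.symm) (fun j => ?_) hdisj
    rw [disjoint_left]
    intro a ha hfa
    rcases mem_insert.1 ha with rfl | ha
    exacts [(hfar j a hfa).1 rfl, (hfar j a hfa).2.1 (mem_singleton.1 ha)]
  · refine Fin.cases ?_ hadj
    intro a ha b hb hab
    simp only [Fin.cons_zero, mem_insert, mem_singleton] at ha hb
    rcases ha with rfl | rfl <;> rcases hb with rfl | rfl
    exacts [absurd rfl hab, hxy, hxy.symm, absurd rfl hab]
  · refine Fin.cons_pairwise_of_symm (r := fun s s' => ∀ a ∈ s, ∀ b ∈ s', ¬G.Adj a b)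
      (fun _ _ h b hb a ha hab => h a ha b hb hab.symm) (fun j a ha b hb => ?_) hnadj
    simp only [mem_insert, mem_singleton] at ha
    rcases ha with rfl | rfl
    exacts [(hfar j b hb).2.2.1, (hfar j b hb).2.2.2]

end InducedMatchings

section MaximalIndependentSets

variable {V : Type*} (G : SimpleGraph V)

def IsMaxIndepOn (W s : Finset V) : Prop :=
  s ⊆ W ∧ IsIndepFinset G s ∧ ∀ w ∈ W, w ∉ s → ∃ x ∈ s, G.Adj w x

def maxIndepSetsOn (W : Finset V) : Set (Finset V) := {s | IsMaxIndepOn G W s}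

theorem maxIndepSetsOn_finite (W : Finset V) : (maxIndepSetsOn G W).Finite :=
  W.powerset.finite_toSet.subset fun _ hs => mem_coe.2 (mem_powerset.2 hs.1)

theorem maxIndepSetsOn_empty : maxIndepSetsOn G ∅ = {∅} := by
  ext s
  constructor
  · exact fun hs => subset_empty.1 hs.1
  · rintro rfl
    exact ⟨subset_refl _, by simp [IsIndepFinset], by simp⟩

theorem maxIndepSetsOn_univ [Fintype V] :
    maxIndepSetsOn G univ = {s | IsMaxIndepFinset G s} := by
  classical
  ext s
  constructor
  · rintro ⟨-, hind, hdom⟩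
    refine ⟨hind, fun s' hs' hss' => eq_of_subset_of_card_le hss' (card_le_card fun w hw => ?_)⟩
    by_contra hws
    obtain ⟨x, hxs, hwx⟩ := hdom w (mem_univ w) hws
    exact hs' hw (hss' hxs) hwx
  · rintro ⟨hind, hmax⟩
    refine ⟨subset_univ s, hind, fun w _ hws => ?_⟩
    by_contra! hfree
    have hins : IsIndepFinset G (insert w s) := by
      intro a ha b hb hab
      rcases mem_insert.1 ha with rfl | ha' <;> rcases mem_insert.1 hb with rfl | hb'
      exacts [G.irrefl hab, hfree b hb' hab, hfree a ha' hab.symm, hind ha' hb' hab]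
    exact hws ((hmax _ hins (subset_insert w s)).symm ▸ mem_insert_self w s)

variable {G} [DecidableEq V] [DecidableRel G.Adj]

theorem IsMaxIndepOn.erase {W F s : Finset V} {u : V} (hs : IsMaxIndepOn G W s) (hu : u ∈ s)
    (hF : Disjoint s F) : IsMaxIndepOn G (W \ (closedNbhdIn G W u ∪ F)) (s.erase u) := by
  obtain ⟨hsW, hind, hdom⟩ := hs
  refine ⟨fun x hx => ?_, fun a ha b hb => hind (mem_of_mem_erase ha) (mem_of_mem_erase hb),
    fun w hw hws => ?_⟩
  · obtain ⟨hxu, hxs⟩ := mem_erase.1 hx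
    simp only [mem_sdiff, mem_union, mem_closedNbhdIn, not_or, not_and]
    exact ⟨hsW hxs, ⟨hxu, fun _ => hind hu hxs⟩, disjoint_left.1 hF hxs⟩
  · simp only [mem_sdiff, mem_union, mem_closedNbhdIn, not_or, not_and] at hw
    obtain ⟨hwW, ⟨hwu, hnadj⟩, -⟩ := hw
    obtain ⟨x, hxs, hwx⟩ := hdom w hwW fun h => hws (mem_erase.2 ⟨hwu, h⟩)
    refine ⟨x, mem_erase.2 ⟨?_, hxs⟩, hwx⟩
    rintro rfl
    exact hnadj hwW hwx.symm

theorem ncard_mem_disjoint_le (W F : Finset V) (u : V) :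
    {s ∈ maxIndepSetsOn G W | u ∈ s ∧ Disjoint s F}.ncard ≤
      (maxIndepSetsOn G (W \ (closedNbhdIn G W u ∪ F))).ncard :=
  Set.ncard_le_ncard_of_injOn (·.erase u) (fun _ hs => hs.1.erase hs.2.1 hs.2.2)
    ((erase_injOn' u).mono fun _ hs => hs.2.1) (maxIndepSetsOn_finite G _)

theorem ncard_maxIndepSetsOn_le {W : Finset V} {v : V} (hv : v ∈ W) :
    (maxIndepSetsOn G W).ncard ≤ {s ∈ maxIndepSetsOn G W | v ∈ s}.ncard +
      {s ∈ maxIndepSetsOn G W | ¬Disjoint s (W.filter (G.Adj v))}.ncard := by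
  refine (Set.ncard_le_ncard (fun s hs => ?_) (((maxIndepSetsOn_finite G W).sep _).union
    ((maxIndepSetsOn_finite G W).sep _))).trans (Set.ncard_union_le _ _)
  by_cases hvs : v ∈ s
  · exact Or.inl ⟨hs, hvs⟩
  obtain ⟨x, hxs, hvx⟩ := hs.2.2 v hv hvs
  exact Or.inr ⟨hs, not_disjoint_iff.2 ⟨x, hxs, mem_filter.2 ⟨hs.1 hxs, hvx⟩⟩⟩

theorem ncard_maxIndepSetsOn_le_of_filter_eq_singleton {W : Finset V} {u v : V} (hv : v ∈ W)
    (hvu : W.filter (G.Adj v) = {u}) :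
    (maxIndepSetsOn G W).ncard ≤ {s ∈ maxIndepSetsOn G W | v ∈ s}.ncard +
      {s ∈ maxIndepSetsOn G W | u ∈ s}.ncard := by
  simpa [hvu] using ncard_maxIndepSetsOn_le (G := G) hv

end MaximalIndependentSets

theorem ncard_not_disjoint_mul_le_sum {α : Type*} [DecidableEq α] {M : Set (Finset α)}
    (hM : M.Finite) {w : ℝ} (hw : 0 ≤ w) (f : ℕ → ℝ) (A : Finset α)
    (hf : ∀ a ∈ A, ∀ B ⊆ A, a ∉ B →
      ({s ∈ M | a ∈ s ∧ Disjoint s B}.ncard : ℝ) * w ≤ f #B) :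
    ({s ∈ M | ¬Disjoint s A}.ncard : ℝ) * w ≤ ∑ i ∈ range #A, f i := by
  induction A using Finset.induction_on with
  | empty => simp
  | insert a B ha ih =>
    have hsplit : {s ∈ M | ¬Disjoint s (insert a B)} ⊆
        {s ∈ M | a ∈ s ∧ Disjoint s B} ∪ {s ∈ M | ¬Disjoint s B} := by
      rintro s ⟨hsM, hs⟩
      rw [disjoint_insert_right] at hs
      by_cases hB : Disjoint s B
      · exact Or.inl ⟨hsM, by tauto, hB⟩
      · exact Or.inr ⟨hsM, hB⟩
    have hcount : {s ∈ M | ¬Disjoint s (insert a B)}.ncard ≤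
        {s ∈ M | a ∈ s ∧ Disjoint s B}.ncard + {s ∈ M | ¬Disjoint s B}.ncard :=
      (Set.ncard_le_ncard hsplit ((hM.sep _).union (hM.sep _))).trans (Set.ncard_union_le _ _)
    rw [card_insert_of_notMem ha, sum_range_succ, add_comm (∑ i ∈ range #B, f i)]
    calc ({s ∈ M | ¬Disjoint s (insert a B)}.ncard : ℝ) * w
        ≤ (({s ∈ M | a ∈ s ∧ Disjoint s B}.ncard : ℝ) +
            {s ∈ M | ¬Disjoint s B}.ncard) * w := by
          gcongr; exact_mod_cast hcount
      _ ≤ f #B + ∑ i ∈ range #B, f i := by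
          rw [add_mul]
          exact add_le_add (hf a (mem_insert_self a B) B (subset_insert a B) ha)
            (ih fun a' ha' B' hB' =>
              hf a' (mem_insert_of_mem ha') B' (hB'.trans (subset_insert a B)))

structure IsBranchingRate (x : ℝ) : Prop where
  pos : 0 < x
  one_le_two_mul_sq : 1 ≤ 2 * x ^ 2
  pendant : 2 * x ^ 4 + x ^ 3 ≤ 2 * x ^ 2
  minDegree_ne_one : ∀ d ≠ 1, x ^ (d + 1) + ∑ i ∈ range d, x ^ (d + 1 + i) ≤ 1

theorem IsBranchingRate.le_one {x : ℝ} (hx : IsBranchingRate x) : x ≤ 1 := by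
  simpa using hx.minDegree_ne_one 0 zero_ne_one

section Branching

variable {V : Type*} (G : SimpleGraph V)

/-- With `x = c⁻¹` this is the bound `mis ≤ 2 ^ t * c ^ (#W - 2 * t)`. -/
def MisBoundOn (x : ℝ) (W : Finset V) : Prop :=
  ∀ t : ℕ, ¬HasInducedMatchingIn G W (t + 1) →
    ((maxIndepSetsOn G W).ncard : ℝ) * x ^ #W ≤ (2 * x ^ 2) ^ t

variable {G} [DecidableEq V] [DecidableRel G.Adj]

theorem ncard_mem_disjoint_mul_le {x : ℝ} (hx0 : 0 ≤ x) (hx1 : x ≤ 1) {W F : Finset V} {u : V}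
    {t k : ℕ} (ih : ∀ W' ⊂ W, MisBoundOn G x W') (hu : u ∈ W) (hF : F ⊆ W)
    (hFu : Disjoint F (closedNbhdIn G W u))
    (hIM : ¬HasInducedMatchingIn G (W \ (closedNbhdIn G W u ∪ F)) (t + 1))
    (hk : k ≤ #(W.filter (G.Adj u)) + 1 + #F) :
    ({s ∈ maxIndepSetsOn G W | u ∈ s ∧ Disjoint s F}.ncard : ℝ) * x ^ #W ≤
      (2 * x ^ 2) ^ t * x ^ k := by
  have hcard := card_sdiff_closedNbhdIn_union hu hF hFu
  set W' := W \ (closedNbhdIn G W u ∪ F)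
  calc ({s ∈ maxIndepSetsOn G W | u ∈ s ∧ Disjoint s F}.ncard : ℝ) * x ^ #W
      ≤ ((maxIndepSetsOn G W').ncard : ℝ) * (x ^ #W' * x ^ k) := by
        refine mul_le_mul (by exact_mod_cast ncard_mem_disjoint_le W F u) ?_ (by positivity)
          (by positivity)
        rw [← pow_add]
        exact pow_le_pow_of_le_one hx0 hx1 (by omega)
    _ = ((maxIndepSetsOn G W').ncard : ℝ) * x ^ #W' * x ^ k := by ring
    _ ≤ (2 * x ^ 2) ^ t * x ^ k := by
        gcongr
        exact ih W' (sdiff_closedNbhdIn_union_ssubset F hu) t hIM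

theorem ncard_mem_mul_le {x : ℝ} (hx0 : 0 ≤ x) (hx1 : x ≤ 1) {W : Finset V} {u : V}
    {t k : ℕ} (ih : ∀ W' ⊂ W, MisBoundOn G x W') (hu : u ∈ W)
    (hIM : ¬HasInducedMatchingIn G (W \ closedNbhdIn G W u) (t + 1))
    (hk : k ≤ #(W.filter (G.Adj u)) + 1) :
    ({s ∈ maxIndepSetsOn G W | u ∈ s}.ncard : ℝ) * x ^ #W ≤ (2 * x ^ 2) ^ t * x ^ k := by
  simpa using ncard_mem_disjoint_mul_le hx0 hx1 ih hu (empty_subset W) (disjoint_empty_left _)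
    (by simpa using hIM) (by simpa using hk)

theorem misBoundOn_of_minDegree_ne_one {x : ℝ} (hx : IsBranchingRate x) (htf : G.CliqueFree 3)
    {W : Finset V} (ih : ∀ W' ⊂ W, MisBoundOn G x W') {v : V} (hv : v ∈ W)
    (hmin : ∀ w ∈ W, #(W.filter (G.Adj v)) ≤ #(W.filter (G.Adj w)))
    (hd : #(W.filter (G.Adj v)) ≠ 1) : MisBoundOn G x W := by
  intro t hIM
  set A := W.filter (G.Adj v)
  set d := #A
  have hv_term := ncard_mem_mul_le hx.pos.le hx.le_one ih hv (t := t) (k := d + 1)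
    (fun h => hIM (h.mono sdiff_subset)) le_rfl
  have hA_term := ncard_not_disjoint_mul_le_sum (maxIndepSetsOn_finite G W) (w := x ^ #W)
    (pow_nonneg hx.pos.le _)
    (fun i => (2 * x ^ 2) ^ t * x ^ (d + 1 + i)) A fun a ha B hBA haB => by
      obtain ⟨haW, hva⟩ := mem_filter.1 ha
      refine ncard_mem_disjoint_mul_le hx.pos.le hx.le_one ih haW
        (hBA.trans (filter_subset _ _)) (disjoint_left.2 fun b hb hba => ?_)
        (fun h => hIM (h.mono sdiff_subset)) (by have := hmin a haW; omega)
      obtain ⟨-, hvb⟩ := mem_filter.1 (hBA hb)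
      rcases mem_closedNbhdIn.1 hba with rfl | ⟨-, hab⟩
      · exact haB hb
      · exact G.isIndepSet_neighborSet_of_triangleFree htf v hva hvb
          (ne_of_mem_of_not_mem hb haB).symm hab
  calc ((maxIndepSetsOn G W).ncard : ℝ) * x ^ #W
      ≤ (({s ∈ maxIndepSetsOn G W | v ∈ s}.ncard : ℝ) +
          {s ∈ maxIndepSetsOn G W | ¬Disjoint s A}.ncard) * x ^ #W := by
        exact mul_le_mul_of_nonneg_right (by exact_mod_cast ncard_maxIndepSetsOn_le hv)
          (pow_nonneg hx.pos.le _)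
    _ ≤ (2 * x ^ 2) ^ t * x ^ (d + 1) +
          ∑ i ∈ range d, (2 * x ^ 2) ^ t * x ^ (d + 1 + i) := by
        rw [add_mul]; exact add_le_add hv_term hA_term
    _ = (2 * x ^ 2) ^ t * (x ^ (d + 1) + ∑ i ∈ range d, x ^ (d + 1 + i)) := by
        rw [mul_add, mul_sum]
    _ ≤ (2 * x ^ 2) ^ t := mul_le_of_le_one_right (by positivity) (hx.minDegree_ne_one d hd)

theorem misBoundOn_of_pendant {x : ℝ} (hx : IsBranchingRate x) {W : Finset V}
    (ih : ∀ W' ⊂ W, MisBoundOn G x W') {u v : V} (hv : v ∈ W)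
    (hvu : W.filter (G.Adj v) = {u}) :
    MisBoundOn G x W := by
  intro t hIM
  obtain ⟨hu, hvu_adj⟩ : u ∈ W ∧ G.Adj v u := mem_filter.1 (hvu ▸ mem_singleton_self u)
  have hNvu := closedNbhdIn_subset_of_filter_eq_singleton hv hvu
  have hIM' : ∀ {R}, closedNbhdIn G W v ∪ closedNbhdIn G W u ⊆ R →
      ¬HasInducedMatchingIn G (W \ R) t :=
    fun hR h => hIM (h.succ_of_adj (sdiff_subset_sdiff subset_rfl hR) hvu_adj hv hu)
  obtain ⟨t, rfl⟩ : ∃ t', t = t' + 1 := Nat.exists_eq_succ_of_ne_zero fun ht =>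
    hIM' subset_rfl (ht ▸ hasInducedMatchingIn_zero _)
  have hu_term := ncard_mem_mul_le hx.pos.le hx.le_one ih hu (t := t)
    (k := #(W.filter (G.Adj u)) + 1) (hIM' (union_subset hNvu subset_rfl)) le_rfl
  have hdu : #(W.filter (G.Adj u)) ≠ 0 :=
    (card_pos.2 ⟨v, mem_filter.2 ⟨hv, hvu_adj.symm⟩⟩).ne'
  calc ((maxIndepSetsOn G W).ncard : ℝ) * x ^ #W
      ≤ ({s ∈ maxIndepSetsOn G W | v ∈ s}.ncard : ℝ) * x ^ #W +
          ({s ∈ maxIndepSetsOn G W | u ∈ s}.ncard : ℝ) * x ^ #W := by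
        rw [← add_mul]
        exact mul_le_mul_of_nonneg_right
          (by exact_mod_cast ncard_maxIndepSetsOn_le_of_filter_eq_singleton hv hvu)
          (pow_nonneg hx.pos.le _)
    _ ≤ (2 * x ^ 2) ^ (t + 1) := ?_
  by_cases hdu1 : #(W.filter (G.Adj u)) = 1
  · obtain ⟨w, hw⟩ := card_eq_one.1 hdu1
    obtain rfl : w = v := (mem_singleton.1 (hw ▸ mem_filter.2 ⟨hv, hvu_adj.symm⟩)).symm
    have hv_term := ncard_mem_mul_le hx.pos.le hx.le_one ih hv (t := t) (k := 2)
      (hIM' (union_subset subset_rfl (closedNbhdIn_subset_of_filter_eq_singleton hu hw)))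
      (by rw [hvu, card_singleton])
    calc _ ≤ (2 * x ^ 2) ^ t * x ^ 2 + (2 * x ^ 2) ^ t * x ^ 2 :=
          add_le_add hv_term (by rwa [hdu1] at hu_term)
      _ = (2 * x ^ 2) ^ (t + 1) := by ring
  · have hv_term := ncard_mem_mul_le hx.pos.le hx.le_one ih hv (t := t + 1) (k := 2)
      (fun h => hIM (h.mono sdiff_subset)) (by rw [hvu, card_singleton])
    have hu_term' : ({s ∈ maxIndepSetsOn G W | u ∈ s}.ncard : ℝ) * x ^ #W ≤
        (2 * x ^ 2) ^ t * x ^ 3 :=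
      hu_term.trans (mul_le_mul_of_nonneg_left
        (pow_le_pow_of_le_one hx.pos.le hx.le_one (by omega)) (by positivity))
    calc _ ≤ (2 * x ^ 2) ^ (t + 1) * x ^ 2 + (2 * x ^ 2) ^ t * x ^ 3 :=
          add_le_add hv_term hu_term'
      _ = (2 * x ^ 2) ^ t * (2 * x ^ 4 + x ^ 3) := by ring
      _ ≤ (2 * x ^ 2) ^ t * (2 * x ^ 2) := by gcongr; exact hx.pendant
      _ = (2 * x ^ 2) ^ (t + 1) := by ring

end Branching

theorem misBoundOn {V : Type*} [DecidableEq V] {G : SimpleGraph V} [DecidableRel G.Adj] {x : ℝ}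
    (hx : IsBranchingRate x) (htf : G.CliqueFree 3) (W : Finset V) : MisBoundOn G x W := by
  induction W using Finset.strongInduction with
  | H W ih =>
    rcases W.eq_empty_or_nonempty with rfl | hne
    · intro t _
      simpa [maxIndepSetsOn_empty] using one_le_pow₀ hx.one_le_two_mul_sq
    obtain ⟨v, hv, hmin⟩ := exists_min_image W (fun w => #(W.filter (G.Adj w))) hne
    by_cases hd : #(W.filter (G.Adj v)) = 1
    · obtain ⟨u, hu⟩ := card_eq_one.1 hd
      exact misBoundOn_of_pendant hx ih hv hu
    · exact misBoundOn_of_minDegree_ne_one hx htf ih hv hmin hd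

theorem branching_sum_succ (x : ℝ) (d : ℕ) :
    x ^ (d + 1 + 1) + ∑ i ∈ range (d + 1), x ^ (d + 1 + 1 + i) =
      x * (x ^ (d + 1) + ∑ i ∈ range d, x ^ (d + 1 + i)) + x ^ (2 * d + 2) := by
  rw [sum_range_succ, mul_add, mul_sum]
  have h : ∀ i, x * x ^ (d + 1 + i) = x ^ (d + 1 + 1 + i) := fun i => by ring
  simp only [h]
  ring

theorem seven_fifths_le_of_forall_root_le {c : ℝ}
    (hmax : ∀ x : ℝ, x ^ 6 - 2 * x ^ 2 - 2 * x - 1 = 0 → x ≤ c) : 7 / 5 ≤ c := by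
  obtain ⟨x, hx, hroot⟩ := intermediate_value_Icc (by norm_num : (7 / 5 : ℝ) ≤ 3 / 2)
    (f := fun x : ℝ => x ^ 6 - 2 * x ^ 2 - 2 * x - 1) (by fun_prop)
    (show (0 : ℝ) ∈ Set.Icc _ _ by constructor <;> norm_num)
  exact hx.1.trans (hmax x hroot)

theorem isBranchingRate_inv {c : ℝ} (hroot : c ^ 6 - 2 * c ^ 2 - 2 * c - 1 = 0)
    (hc : 7 / 5 ≤ c) : IsBranchingRate c⁻¹ := by
  have hc0 : 0 < c := by linarith
  set x := c⁻¹
  have hx0 : 0 < x := inv_pos.2 hc0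
  have hx57 : x ≤ 5 / 7 := by
    rw [inv_le_comm₀ hc0 (by norm_num)]; linarith
  have hxroot : 2 * x ^ 4 + 2 * x ^ 5 + x ^ 6 = 1 := by
    simp only [x, inv_pow]
    field_simp
    linarith
  refine ⟨hx0, ?_, ?_, ?_⟩
  · nlinarith [pow_pos hx0 4, pow_pos hx0 5, mul_pos hx0 hx0]
  · nlinarith [pow_pos hx0 2, pow_pos hx0 3]
  · intro d hd
    match d, hd with
    | 0, _ => simpa using hx57.trans (by norm_num)
    | 2, _ =>
      norm_num [sum_range_succ]
      nlinarith [pow_pos hx0 2, pow_pos hx0 3]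
    | d + 3, _ =>
      induction d with
      | zero =>
        norm_num [sum_range_succ]
        nlinarith [pow_pos hx0 5]
      | succ d ih =>
        rw [branching_sum_succ]
        have h8 : x ^ (2 * (d + 3) + 2) ≤ x ^ 8 :=
          pow_le_pow_of_le_one hx0.le (hx57.trans (by norm_num)) (by omega)
        have h8' : x ^ 8 ≤ (5 / 7) ^ 8 := pow_le_pow_left₀ hx0.le hx57 8
        nlinarith [ih (by omega)]

theorem mis_trianglefree_no_induced_matching_le (c : ℝ)
    (hroot : c ^ 6 - 2 * c ^ 2 - 2 * c - 1 = 0)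
    (hmax : ∀ x : ℝ, x ^ 6 - 2 * x ^ 2 - 2 * x - 1 = 0 → x ≤ c)
    (n t : ℕ) (htn : 2 * t ≤ n) (G : SimpleGraph (Fin n))
    (htf : G.CliqueFree 3) (hmatch : ¬ HasInducedMatching G (t + 1)) :
    (mis G : ℝ) ≤ 2 ^ t * c ^ (n - 2 * t) := by
  classical
  have hc := seven_fifths_le_of_forall_root_le hmax
  have hbound := misBoundOn (isBranchingRate_inv hroot hc) htf univ t
    fun h => hmatch h.hasInducedMatching
  rw [maxIndepSetsOn_univ, card_univ, Fintype.card_fin, ← mis] at hbound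
  obtain ⟨m, rfl⟩ := Nat.exists_eq_add_of_le htn
  rw [Nat.add_sub_cancel_left]
  have hcancel (k : ℕ) : c⁻¹ ^ k * c ^ k = 1 := by
    rw [← mul_pow, inv_mul_cancel₀ (by positivity), one_pow]
  calc (mis G : ℝ) = mis G * c⁻¹ ^ (2 * t + m) * c ^ (2 * t + m) := by
        rw [mul_assoc, hcancel, mul_one]
    _ ≤ (2 * c⁻¹ ^ 2) ^ t * c ^ (2 * t + m) := by gcongr
    _ = 2 ^ t * c ^ m * (c⁻¹ ^ (2 * t) * c ^ (2 * t)) := by ring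
    _ = 2 ^ t * c ^ m := by rw [hcancel, mul_one]
end
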